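/- arXiv:2004.07650 — 9 statements merged into one kernel-verified Lean document; each statement's English description precedes it below -/
import Mathlib

section
/- Let G = (V, E) be a connected graph and let C₁ = (V₁, V∖V₁) and C₂ = (V₂, V∖V₂) be two cuts that are not parallel (i.e., none of V₁, V∖V₁ is a subset of V₂ or of V∖V₂). If C₁ is an atomic cut (both G[V₁] and G[V∖V₁] are connected), then the cut-set ∂_G(V₁) intercepts C₂, i.e., no connected component of G with the edges ∂_G(V₁) removed contains all edges of ∂_G(V₂). -/
open SimpleGraph

/-- The cut-set of a vertex set `A`: edges of `G` with one endpoint in `A` and one outside. -/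
def ecut {V : Type*} (G : SimpleGraph V) (A : Set V) : Set (Sym2 V) :=
  {e | e ∈ G.edgeSet ∧ ∃ u v, e = s(u, v) ∧ u ∈ A ∧ v ∉ A}

/-- Edges all of whose endpoints lie in `A`. -/
def edgesWithin {V : Type*} (A : Set V) : Set (Sym2 V) :=
  {e | ∀ x ∈ e, x ∈ A}

/-- The set of endpoints of a set of edges. -/
def endpts {V : Type*} (F : Set (Sym2 V)) : Set V :=
  {x | ∃ e ∈ F, x ∈ e}

/-- `F` intercepts the cut `(A, Aᶜ)`: no connected component of `G` with the edges of `F`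
removed contains all edges of the cut-set of `A`. -/
def Intercepts {V : Type*} (G : SimpleGraph V) (F : Set (Sym2 V)) (A : Set V) : Prop :=
  ¬ ∃ u : V, ∀ e ∈ ecut G A,
    e ∈ (G.deleteEdges F).edgeSet ∧ ∀ x ∈ e, (G.deleteEdges F).Reachable u x

/-- A cut `(A, Aᶜ)` is atomic if both sides induce connected subgraphs. -/
def AtomicCut {V : Type*} (G : SimpleGraph V) (A : Set V) : Prop :=
  (G.induce A).Connected ∧ (G.induce Aᶜ).Connected

/-- Two cuts are parallel if one side of the first is contained in one side of the second. -/
def ParallelCuts {V : Type*} (A B : Set V) : Prop :=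
  A ⊆ B ∨ A ⊆ Bᶜ ∨ Aᶜ ⊆ B ∨ Aᶜ ⊆ Bᶜ

/-- A partition of the vertex set into nonempty clusters. -/
def IsVertexPartition {V : Type*} (Pa : Set (Set V)) : Prop :=
  (∀ P ∈ Pa, P.Nonempty) ∧ ∀ x : V, ∃! P, P ∈ Pa ∧ x ∈ P

/-- The intercluster edges of a vertex partition. -/
def interEdges {V : Type*} (G : SimpleGraph V) (Pa : Set (Set V)) : Set (Sym2 V) :=
  {e | e ∈ G.edgeSet ∧ ∃ u v, e = s(u, v) ∧ ∀ P ∈ Pa, ¬(u ∈ P ∧ v ∈ P)}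

/-- `W` is the vertex set of a connected component of `G`. -/
def IsComponentSet {V : Type*} (G : SimpleGraph V) (W : Set V) : Prop :=
  ∃ v : V, W = {u | G.Reachable u v}

/-- `E'` is an `IA_H(T, t, q, d, c)` set: it is the set of intercluster edges of a vertex
partition with connected parts, and within each connected component `W` of `H`, for every
nonempty `T' ⊆ T ∩ W` admitting a `(T', T∖T', t, d)`-cut of size `α ≤ d`, there is a
`(T', T∖T', q, α)`-cut whose cut-set has at most `max (α - c) 0` edges inside any single part. -/
def IsIASet {V : Type*} (H : SimpleGraph V) (T : Set V) (t q d c : ℕ)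
    (E' : Set (Sym2 V)) : Prop :=
  ∃ Pa : Set (Set V), IsVertexPartition Pa ∧ (∀ P ∈ Pa, (H.induce P).Connected) ∧
    E' = interEdges H Pa ∧
    ∀ W : Set V, IsComponentSet H W →
      ∀ T' : Set V, T' ⊆ T ∩ W → T'.Nonempty → ∀ α : ℕ, α ≤ d →
        (∃ A : Set V, A ⊆ W ∧ A.ncard ≤ t ∧ A ∩ T = T' ∧ (ecut H A).ncard = α) →
        ∃ B : Set V, B ⊆ W ∧ B.ncard ≤ q ∧ B ∩ T = T' ∧ (ecut H B).ncard ≤ α ∧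
          ∀ P ∈ Pa, (ecut H B ∩ edgesWithin P).ncard ≤ α - c

lemma exists_cross_adj {V : Type*} {H : SimpleGraph V} {p : V → Prop} {x y : V}
    (w : H.Walk x y) (hx : p x) (hy : ¬ p y) :
    ∃ u v, H.Adj u v ∧ p u ∧ ¬ p v := by
  induction w with
  | nil => exact absurd hx hy
  | @cons a b c h w ih =>
    by_cases hb : p b
    · exact ih hb hy
    · exact ⟨a, b, h, hx, hb⟩

lemma side_preserved {V : Type*} {G : SimpleGraph V} {V₁ : Set V} {x y : V}
    (h : (G.deleteEdges (ecut G V₁)).Reachable x y) (hy : y ∈ V₁) : x ∈ V₁ := by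
  obtain ⟨w⟩ := h
  induction w with
  | nil => exact hy
  | @cons a b c h w ih =>
    have hb : b ∈ V₁ := ih hy
    by_contra ha
    rw [SimpleGraph.deleteEdges_adj] at h
    exact h.2 ⟨G.mem_edgeSet.mpr h.1, b, a, Sym2.eq_swap, hb, ha⟩

lemma crossing_edge {V : Type*} {G : SimpleGraph V} {V₁ V₂ : Set V}
    (hc : (G.induce V₁).Connected) {a b : V} (ha : a ∈ V₁ ∩ V₂) (hb : b ∈ V₁ ∩ V₂ᶜ) :
    ∃ u v : V, G.Adj u v ∧ u ∈ V₁ ∧ v ∈ V₁ ∧ u ∈ V₂ ∧ v ∉ V₂ := by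
  obtain ⟨w⟩ := hc.preconnected ⟨a, ha.1⟩ ⟨b, hb.1⟩
  obtain ⟨u, v, huv, hu, hv⟩ :=
    exists_cross_adj (p := fun z : V₁ => (z : V) ∈ V₂) w ha.2 hb.2
  exact ⟨u, v, huv, u.2, v.2, hu, hv⟩

/-- If `G` is connected, `C₁ = (V₁, V₁ᶜ)` and `C₂ = (V₂, V₂ᶜ)` are two non-parallel cuts,
and `C₁` is atomic, then the cut-set of `C₁` intercepts `C₂`. -/
theorem statement_0 {V : Type*} [Fintype V] [DecidableEq V]
    (G : SimpleGraph V) (hG : G.Connected) (V₁ V₂ : Set V)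
    (hnp : ¬ ParallelCuts V₁ V₂) (hat : AtomicCut G V₁) :
    Intercepts G (ecut G V₁) V₂ := by
  simp only [ParallelCuts, not_or, Set.not_subset] at hnp
  obtain ⟨⟨a₁, ha₁, ha₁'⟩, ⟨a₂, ha₂, ha₂'⟩, ⟨a₃, ha₃, ha₃'⟩, ⟨a₄, ha₄, ha₄'⟩⟩ := hnp
  rw [Set.notMem_compl_iff] at ha₂' ha₄'
  -- a₂ ∈ V₁ ∩ V₂, a₁ ∈ V₁ ∩ V₂ᶜ, a₄ ∈ V₁ᶜ ∩ V₂, a₃ ∈ V₁ᶜ ∩ V₂ᶜ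
  obtain ⟨u₁, v₁, hadj₁, hu₁, hv₁, hu₁₂, hv₁₂⟩ :=
    crossing_edge (V₂ := V₂) hat.1 ⟨ha₂, ha₂'⟩ ⟨ha₁, ha₁'⟩
  obtain ⟨u₂, v₂, hadj₂, hu₂, hv₂, hu₂₂, hv₂₂⟩ :=
    crossing_edge (V₂ := V₂) hat.2 ⟨ha₄, ha₄'⟩ ⟨ha₃, ha₃'⟩
  rintro ⟨u, hu⟩
  have he₁ : s(u₁, v₁) ∈ ecut G V₂ := ⟨G.mem_edgeSet.mpr hadj₁, u₁, v₁, rfl, hu₁₂, hv₁₂⟩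
  have he₂ : s(u₂, v₂) ∈ ecut G V₂ := ⟨G.mem_edgeSet.mpr hadj₂, u₂, v₂, rfl, hu₂₂, hv₂₂⟩
  have h₁ := (hu _ he₁).2 u₁ (Sym2.mem_mk_left u₁ v₁)
  have h₂ := (hu _ he₂).2 u₂ (Sym2.mem_mk_left u₂ v₂)
  have huV₁ : u ∈ V₁ := side_preserved h₁ hu₁
  have huV₁' : u ∈ V₁ᶜ := by
    by_contra h
    rw [Set.notMem_compl_iff] at h
    exact hu₂ (side_preserved h₂.symm h)
  exact huV₁' huV₁
end

section
/- Let G = (V, E) be a connected graph and let C₁ = (V₁, V∖V₁) and C₂ = (V₂, V∖V₂) be two cuts on G that are not parallel. Then either ∂_G(V₁) intercepts C₂ or ∂_G(V₂) intercepts C₁. -/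
open SimpleGraph

lemma ecut_compl {V : Type*} (G : SimpleGraph V) (A : Set V) : ecut G Aᶜ = ecut G A := by
  ext e
  constructor
  · rintro ⟨he, u, v, rfl, hu, hv⟩
    exact ⟨he, v, u, Sym2.eq_swap, by simpa using hv, hu⟩
  · rintro ⟨he, u, v, rfl, hu, hv⟩
    exact ⟨he, v, u, Sym2.eq_swap, hv, by simpa using hu⟩

lemma mem_ecut {V : Type*} (G : SimpleGraph V) {A : Set V} {a b : V}
    (h : G.Adj a b) (ha : a ∈ A) (hb : b ∉ A) : s(a, b) ∈ ecut G A :=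
  ⟨G.mem_edgeSet.2 h, a, b, rfl, ha, hb⟩

lemma notMem_ecut {V : Type*} (G : SimpleGraph V) {A : Set V} {a b : V}
    (ha : a ∈ A) (hb : b ∈ A) : s(a, b) ∉ ecut G A := by
  rintro ⟨-, u, v, heq, hu, hv⟩
  rw [Sym2.eq_iff] at heq
  rcases heq with ⟨rfl, rfl⟩ | ⟨rfl, rfl⟩
  · exact hv hb
  · exact hv ha

lemma notMem_ecut' {V : Type*} (G : SimpleGraph V) {A : Set V} {a b : V}
    (ha : a ∉ A) (hb : b ∉ A) : s(a, b) ∉ ecut G A := by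
  rintro ⟨-, u, v, heq, hu, hv⟩
  rw [Sym2.eq_iff] at heq
  rcases heq with ⟨rfl, rfl⟩ | ⟨rfl, rfl⟩
  · exact ha hu
  · exact hb hu

lemma reach_side {V : Type*} (G : SimpleGraph V) (A : Set V) :
    ∀ {x y : V}, (G.deleteEdges (ecut G A)).Reachable x y → (x ∈ A ↔ y ∈ A) := by
  intro x y h
  obtain ⟨w⟩ := h
  induction w with
  | nil => rfl
  | @cons u v t h p ih =>
    rw [SimpleGraph.deleteEdges_adj] at h
    refine Iff.trans ?_ ih
    by_cases h1 : u ∈ A <;> by_cases h2 : v ∈ A <;>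
      first
        | (exact iff_of_true h1 h2)
        | (exact iff_of_false h1 h2)
        | (exact absurd (mem_ecut G h.1 h1 h2) h.2)
        | (exact absurd (Sym2.eq_swap ▸ mem_ecut G h.1.symm h2 h1) h.2)

lemma reach_cross {V : Type*} (G : SimpleGraph V) (A : Set V) :
    ∀ {x y : V}, G.Walk x y → x ∈ A → y ∉ A →
      ∃ a b, G.Adj a b ∧ a ∈ A ∧ b ∉ A ∧ (G.deleteEdges (ecut G A)).Reachable x a := by
  intro x y w
  induction w with
  | nil => intro hx hy; exact absurd hx hy
  | @cons u v t h p ih =>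
    intro hx hy
    by_cases hv : v ∈ A
    · obtain ⟨a, b, hab, ha, hb, hr⟩ := ih hv hy
      refine ⟨a, b, hab, ha, hb, ?_⟩
      have hadj : (G.deleteEdges (ecut G A)).Adj u v :=
        SimpleGraph.deleteEdges_adj.2 ⟨h, notMem_ecut G hx hv⟩
      exact hadj.reachable.trans hr
    · exact ⟨u, v, h, hx, hv, SimpleGraph.Reachable.refl u⟩

lemma key_lemma {V : Type*} (G : SimpleGraph V) (hG : G.Connected) (P Q : Set V)
    (hcorner : (Pᶜ ∩ Qᶜ).Nonempty) (hP : P.Nonempty)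
    (hQP : endpts (ecut G Q) ⊆ P) (hPQ : endpts (ecut G P) ⊆ Q) : False := by
  obtain ⟨z, hzP, hzQ⟩ := hcorner
  obtain ⟨w, hw⟩ := hP
  obtain ⟨walk⟩ := hG.preconnected z w
  obtain ⟨a, b, hab, haP, hbP, hra⟩ := reach_cross G Pᶜ walk hzP (by simpa using hw)
  rw [ecut_compl] at hra
  have haQ : a ∈ Q := hPQ ⟨s(b, a),
    mem_ecut G hab.symm (by simpa using hbP) (by simpa using haP), by simp⟩
  obtain ⟨walk2⟩ := hra
  obtain ⟨c, d, hcd, hcQ, hdQ, hrc⟩ :=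
    reach_cross (G.deleteEdges (ecut G P)) Qᶜ walk2 hzQ (by simpa using haQ)
  have hcdG : G.Adj c d := (SimpleGraph.deleteEdges_adj.1 hcd).1
  have hrc' : (G.deleteEdges (ecut G P)).Reachable z c :=
    hrc.mono (SimpleGraph.deleteEdges_le _)
  have hcP : c ∈ P := hQP ⟨s(d, c),
    mem_ecut G hcdG.symm (by simpa using hdQ) hcQ, by simp⟩
  exact hzP ((reach_side G P hrc').2 hcP)

/-- If `G` is connected and `C₁ = (V₁, V₁ᶜ)`, `C₂ = (V₂, V₂ᶜ)` are two non-parallel cuts,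
then either `∂_G(V₁)` intercepts `C₂` or `∂_G(V₂)` intercepts `C₁`. -/
theorem statement_1 {V : Type*} [Fintype V] [DecidableEq V]
    (G : SimpleGraph V) (hG : G.Connected) (V₁ V₂ : Set V)
    (hnp : ¬ ParallelCuts V₁ V₂) :
    Intercepts G (ecut G V₁) V₂ ∨ Intercepts G (ecut G V₂) V₁ := by
  by_contra hcon
  push_neg at hcon
  obtain ⟨h1, h2⟩ := hcon
  rw [Intercepts, not_not] at h1 h2
  obtain ⟨u₁, hu1⟩ := h1
  obtain ⟨u₂, hu2⟩ := h2
  rw [ParallelCuts] at hnp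
  push_neg at hnp
  obtain ⟨hn1, hn2, hn3, hn4⟩ := hnp
  rw [Set.not_subset] at hn1 hn2 hn3 hn4
  obtain ⟨x1, hx1a, hx1b⟩ := hn1  -- x1 ∈ V₁, x1 ∉ V₂
  obtain ⟨x2, hx2a, hx2b⟩ := hn2  -- x2 ∈ V₁, x2 ∈ V₂
  obtain ⟨x3, hx3a, hx3b⟩ := hn3  -- x3 ∉ V₁, x3 ∉ V₂
  obtain ⟨x4, hx4a, hx4b⟩ := hn4  -- x4 ∉ V₁, x4 ∈ V₂
  rw [Set.mem_compl_iff] at hx3a hx4a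
  rw [Set.notMem_compl_iff] at hx2b hx4b
  have hep1 : ∀ x ∈ endpts (ecut G V₂), (G.deleteEdges (ecut G V₁)).Reachable u₁ x := by
    rintro x ⟨e, he, hxe⟩
    exact (hu1 e he).2 x hxe
  have hep2 : ∀ x ∈ endpts (ecut G V₁), (G.deleteEdges (ecut G V₂)).Reachable u₂ x := by
    rintro x ⟨e, he, hxe⟩
    exact (hu2 e he).2 x hxe
  by_cases hu1V : u₁ ∈ V₁ <;> by_cases hu2V : u₂ ∈ V₂
  · exact key_lemma G hG V₁ V₂ ⟨x3, hx3a, hx3b⟩ ⟨x1, hx1a⟩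
      (fun x hx => (reach_side G V₁ (hep1 x hx)).1 hu1V)
      (fun x hx => (reach_side G V₂ (hep2 x hx)).1 hu2V)
  · refine key_lemma G hG V₁ V₂ᶜ ⟨x4, hx4a, by simpa using hx4b⟩ ⟨x1, hx1a⟩
      (fun x hx => ?_) (fun x hx => ?_)
    · rw [ecut_compl] at hx
      exact (reach_side G V₁ (hep1 x hx)).1 hu1V
    · exact fun hxV₂ => hu2V ((reach_side G V₂ (hep2 x hx)).2 hxV₂)
  · refine key_lemma G hG V₁ᶜ V₂ ⟨x1, by simpa using hx1a, hx1b⟩ ⟨x3, hx3a⟩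
      (fun x hx => ?_) (fun x hx => ?_)
    · exact fun hxV₁ => hu1V ((reach_side G V₁ (hep1 x hx)).2 hxV₁)
    · rw [ecut_compl] at hx
      exact (reach_side G V₂ (hep2 x hx)).1 hu2V
  · refine key_lemma G hG V₁ᶜ V₂ᶜ ⟨x2, by simpa using hx2a, by simpa using hx2b⟩ ⟨x3, hx3a⟩
      (fun x hx => ?_) (fun x hx => ?_)
    · rw [ecut_compl] at hx
      exact fun hxV₁ => hu1V ((reach_side G V₁ (hep1 x hx)).2 hxV₁)
    · rw [ecut_compl] at hx
      exact fun hxV₂ => hu2V ((reach_side G V₂ (hep2 x hx)).2 hxV₂)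
end

section
/- Let G = (V, E) be a connected graph, T ⊆ V a set of terminals, and let C₁ = (V₁, V∖V₁) be a cut partitioning T into T₁ and T∖T₁, and C₂ = (V₂, V∖V₂) a cut partitioning T into T₂ and T∖T₂. Suppose T₁ ∩ T₂ = ∅. Let V₁' = V₁ ∖ (V₁∩V₂) and V₂' = V₂ ∖ (V₁∩V₂). Then (V₁', V∖V₁') is a cut partitioning T into T₁ and T∖T₁, (V₂', V∖V₂') is a cut partitioning T into T₂ and T∖T₂, both cut-sets ∂_G(V₁') and ∂_G(V₂') are contained in ∂_G(V₁) ∪ ∂_G(V₂), and |∂_G(V₁')| + |∂_G(V₂')| ≤ |∂_G(V₁)| + |∂_G(V₂)|. In particular, one of the following holds: |∂_G(V₁')| < |∂_G(V₁)|; or |∂_G(V₂')| < |∂_G(V₂)|; or |∂_G(V₁')| = |∂_G(V₁)| and |∂_G(V₂')| = |∂_G(V₂)|. -/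
open SimpleGraph

lemma ecut_diff_subset {V : Type*} (G : SimpleGraph V) (A B : Set V) :
    ecut G (A \ B) ⊆ ecut G A ∪ ecut G B := by
  rintro e ⟨he, u, v, rfl, hu, hv⟩
  rcases Classical.em (v ∈ A) with hvA | hvA
  · rcases Classical.em (v ∈ B) with hvB | hvB
    · exact Or.inr ⟨he, v, u, Sym2.eq_swap, hvB, hu.2⟩
    · exact absurd ⟨hvA, hvB⟩ hv
  · exact Or.inl ⟨he, u, v, rfl, hu.1, hvA⟩

lemma ecut_diff_inter {V : Type*} (G : SimpleGraph V) (A B : Set V) :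
    ecut G (A \ B) ∩ ecut G (B \ A) ⊆ ecut G A ∩ ecut G B := by
  rintro e ⟨⟨he, u, v, rfl, hu, hv⟩, ⟨-, u', v', heq, hu', hv'⟩⟩
  rcases Sym2.eq_iff.mp heq with ⟨rfl, rfl⟩ | ⟨rfl, rfl⟩
  · exact (hu.2 hu'.1).elim
  · exact ⟨⟨he, u, v, rfl, hu.1, hu'.2⟩, ⟨he, v, u, Sym2.eq_swap, hu'.1, hu.2⟩⟩

/-- The swapping lemma: if the cut `(V₁, V₁ᶜ)` partitions `T` into `T₁ = V₁ ∩ T` and its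
complement, the cut `(V₂, V₂ᶜ)` partitions `T` into `T₂ = V₂ ∩ T` and its complement, and
`T₁ ∩ T₂ = ∅`, then letting `V₁' = V₁ ∖ (V₁ ∩ V₂)` and `V₂' = V₂ ∖ (V₁ ∩ V₂)`, the cut
`(V₁', V₁'ᶜ)` partitions `T` into `T₁` and `T ∖ T₁`, the cut `(V₂', V₂'ᶜ)` partitions `T`
into `T₂` and `T ∖ T₂`, both new cut-sets are contained in `∂_G(V₁) ∪ ∂_G(V₂)`, the sum of
the new cut sizes is at most the sum of the original cut sizes, and moreover one of the three
size alternatives holds. -/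
theorem statement_2 {V : Type*} [Fintype V] [DecidableEq V]
    (G : SimpleGraph V) (hG : G.Connected) (T V₁ V₂ : Set V)
    (hdisj : (V₁ ∩ T) ∩ (V₂ ∩ T) = ∅) :
    (V₁ \ (V₁ ∩ V₂)) ∩ T = V₁ ∩ T ∧
    (V₂ \ (V₁ ∩ V₂)) ∩ T = V₂ ∩ T ∧
    ecut G (V₁ \ (V₁ ∩ V₂)) ⊆ ecut G V₁ ∪ ecut G V₂ ∧
    ecut G (V₂ \ (V₁ ∩ V₂)) ⊆ ecut G V₁ ∪ ecut G V₂ ∧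
    (ecut G (V₁ \ (V₁ ∩ V₂))).ncard + (ecut G (V₂ \ (V₁ ∩ V₂))).ncard
      ≤ (ecut G V₁).ncard + (ecut G V₂).ncard ∧
    ((ecut G (V₁ \ (V₁ ∩ V₂))).ncard < (ecut G V₁).ncard ∨
     (ecut G (V₂ \ (V₁ ∩ V₂))).ncard < (ecut G V₂).ncard ∨
     ((ecut G (V₁ \ (V₁ ∩ V₂))).ncard = (ecut G V₁).ncard ∧
      (ecut G (V₂ \ (V₁ ∩ V₂))).ncard = (ecut G V₂).ncard)) := by
  have h12 : V₁ ∩ V₂ ∩ T = ∅ := by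
    rw [← hdisj]; ext x; simp; tauto
  have hT1 : (V₁ \ (V₁ ∩ V₂)) ∩ T = V₁ ∩ T := by
    ext x
    simp only [Set.mem_inter_iff, Set.mem_diff]
    constructor
    · rintro ⟨⟨h1, -⟩, h2⟩; exact ⟨h1, h2⟩
    · rintro ⟨h1, h2⟩
      refine ⟨⟨h1, fun hx => ?_⟩, h2⟩
      have : x ∈ (V₁ ∩ V₂ ∩ T : Set V) := ⟨hx, h2⟩
      simp [h12] at this
  have hT2 : (V₂ \ (V₁ ∩ V₂)) ∩ T = V₂ ∩ T := by
    ext x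
    simp only [Set.mem_inter_iff, Set.mem_diff]
    constructor
    · rintro ⟨⟨h1, -⟩, h2⟩; exact ⟨h1, h2⟩
    · rintro ⟨h1, h2⟩
      refine ⟨⟨h1, fun hx => ?_⟩, h2⟩
      have : x ∈ (V₁ ∩ V₂ ∩ T : Set V) := ⟨hx, h2⟩
      simp [h12] at this
  have e1 : V₁ \ (V₁ ∩ V₂) = V₁ \ V₂ := Set.diff_self_inter
  have e2 : V₂ \ (V₁ ∩ V₂) = V₂ \ V₁ := by rw [Set.inter_comm]; exact Set.diff_self_inter
  rw [e1] at hT1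
  rw [e2] at hT2
  rw [e1, e2]
  have hs1 := ecut_diff_subset G V₁ V₂
  have hs2' := ecut_diff_subset G V₂ V₁
  have hs2 : ecut G (V₂ \ V₁) ⊆ ecut G V₁ ∪ ecut G V₂ := fun e he =>
    (hs2' he).symm
  have hint := ecut_diff_inter G V₁ V₂
  set X' := ecut G (V₁ \ V₂)
  set Y' := ecut G (V₂ \ V₁)
  set X := ecut G V₁
  set Y := ecut G V₂
  have hXY : X'.ncard + Y'.ncard ≤ X.ncard + Y.ncard := by
    have h1 : (X' ∪ Y').ncard + (X' ∩ Y').ncard = X'.ncard + Y'.ncard :=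
      Set.ncard_union_add_ncard_inter X' Y' (Set.toFinite _) (Set.toFinite _)
    have h2 : (X ∪ Y).ncard + (X ∩ Y).ncard = X.ncard + Y.ncard :=
      Set.ncard_union_add_ncard_inter X Y (Set.toFinite _) (Set.toFinite _)
    have h3 : (X' ∪ Y').ncard ≤ (X ∪ Y).ncard :=
      Set.ncard_le_ncard (Set.union_subset hs1 hs2) (Set.toFinite _)
    have h4 : (X' ∩ Y').ncard ≤ (X ∩ Y).ncard :=
      Set.ncard_le_ncard hint (Set.toFinite _)
    omega
  exact ⟨hT1, hT2, hs1, hs2, hXY, by omega⟩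
end

section
/- Let G = (V, E) be a connected graph, T ⊆ V, and let (V', V∖V') be a simple cut (i.e., G[V'] is connected). Let E' ⊆ ∂_G(V') be such that E' is the cut-set of a cut (V†, V∖V†) of G separating T nontrivially, with V' ⊆ V†. Let E'' be another edge set inducing a cut that partitions T the same way as the cut induced by E'. Then there exists a subset of (∂_G(V') ∖ E') ∪ E'' which is the cut-set of a cut (Q, V∖Q) that partitions T the same way as (V', V∖V') does, and moreover Q ⊆ V' ∪ (V∖V†). -/
open SimpleGraph

/-- Replacement lemma: let `(V', V'ᶜ)` be a simple cut, `E' ⊆ ∂_G(V')` the cut-set of a cut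
`(Vd, Vdᶜ)` separating `T` nontrivially with `V' ⊆ Vd`, and `E''` the cut-set of a cut `(W, Wᶜ)`
partitioning `T` the same way as `(Vd, Vdᶜ)`. Then some subset of `(∂_G(V') ∖ E') ∪ E''` is the
cut-set of a cut `(Q, Qᶜ)` partitioning `T` the same way as `(V', V'ᶜ)`, with `Q ⊆ V' ∪ Vdᶜ`. -/
theorem statement_4 {V : Type*} [Fintype V] [DecidableEq V]
    (G : SimpleGraph V) (hG : G.Connected) (T V' Vd W : Set V)
    (E' E'' : Set (Sym2 V))
    (hsimple : (G.induce V').Connected)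
    (hE'sub : E' ⊆ ecut G V')
    (hE'cut : E' = ecut G Vd)
    (hVsub : V' ⊆ Vd)
    (hsep : (Vd ∩ T).Nonempty ∧ (T \ Vd).Nonempty)
    (hE'' : E'' = ecut G W)
    (hWpart : W ∩ T = Vd ∩ T ∨ W ∩ T = T \ Vd) :
    ∃ Q : Set V, Q ⊆ V' ∪ Vdᶜ ∧ ecut G Q ⊆ (ecut G V' \ E') ∪ E'' ∧ Q ∩ T = V' ∩ T := by
  rcases hWpart with hWT | hWT
  · refine ⟨W ∩ (V' ∪ Vdᶜ), Set.inter_subset_right, ?_, ?_⟩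
    · rintro e ⟨heG, u, v, rfl, hu, hv⟩
      obtain ⟨huW, huV⟩ := hu
      by_cases hvW : v ∈ W
      · -- v ∈ W, so v ∉ V' ∪ Vdᶜ, i.e. v ∉ V' and v ∈ Vd
        have hv' : v ∉ V' ∧ v ∈ Vd := by
          by_contra h
          push_neg at h
          apply hv
          rcases Classical.em (v ∈ V') with h1 | h1
          · exact ⟨hvW, Or.inl h1⟩
          · exact ⟨hvW, Or.inr (h h1)⟩
        rcases huV with huV' | huVd
        · -- u ∈ V' : edge is in ecut G V' \ E'
          left
          refine ⟨⟨heG, u, v, rfl, huV', hv'.1⟩, ?_⟩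
          rw [hE'cut]
          rintro ⟨-, a, b, hab, ha, hb⟩
          rw [Sym2.eq_iff] at hab
          rcases hab with ⟨rfl, rfl⟩ | ⟨rfl, rfl⟩
          · exact hb hv'.2
          · exact hb (hVsub huV')
        · -- u ∈ Vdᶜ : then s(u,v) ∈ E' ⊆ ecut G V', contradiction
          exfalso
          have hmem : s(u, v) ∈ E' := by
            rw [hE'cut]
            exact ⟨heG, v, u, Sym2.eq_swap.symm, hv'.2, huVd⟩
          obtain ⟨-, a, b, hab, ha, hb⟩ := hE'sub hmem
          rw [Sym2.eq_iff] at hab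
          rcases hab with ⟨rfl, rfl⟩ | ⟨rfl, rfl⟩
          · exact huVd (hVsub ha)
          · exact hv'.1 ha
      · -- v ∉ W : edge is in E''
        right
        rw [hE'']
        exact ⟨heG, u, v, rfl, huW, hvW⟩
    · ext x
      simp only [Set.mem_inter_iff, Set.mem_union, Set.mem_compl_iff]
      constructor
      · rintro ⟨⟨hxW, hxV⟩, hxT⟩
        have hxVd : x ∈ Vd := (Set.ext_iff.mp hWT x).mp ⟨hxW, hxT⟩ |>.1
        rcases hxV with h | h
        · exact ⟨h, hxT⟩
        · exact absurd hxVd h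
      · rintro ⟨hxV', hxT⟩
        have hxW : x ∈ W := ((Set.ext_iff.mp hWT x).mpr ⟨hVsub hxV', hxT⟩).1
        exact ⟨⟨hxW, Or.inl hxV'⟩, hxT⟩
  · refine ⟨Wᶜ ∩ (V' ∪ Vdᶜ), Set.inter_subset_right, ?_, ?_⟩
    · rintro e ⟨heG, u, v, rfl, hu, hv⟩
      obtain ⟨huW, huV⟩ := hu
      by_cases hvW : v ∈ Wᶜ
      · have hv' : v ∉ V' ∧ v ∈ Vd := by
          by_contra h
          push_neg at h
          apply hv
          rcases Classical.em (v ∈ V') with h1 | h1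
          · exact ⟨hvW, Or.inl h1⟩
          · exact ⟨hvW, Or.inr (h h1)⟩
        rcases huV with huV' | huVd
        · left
          refine ⟨⟨heG, u, v, rfl, huV', hv'.1⟩, ?_⟩
          rw [hE'cut]
          rintro ⟨-, a, b, hab, ha, hb⟩
          rw [Sym2.eq_iff] at hab
          rcases hab with ⟨rfl, rfl⟩ | ⟨rfl, rfl⟩
          · exact hb hv'.2
          · exact hb (hVsub huV')
        · exfalso
          have hmem : s(u, v) ∈ E' := by
            rw [hE'cut]
            exact ⟨heG, v, u, Sym2.eq_swap.symm, hv'.2, huVd⟩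
          obtain ⟨-, a, b, hab, ha, hb⟩ := hE'sub hmem
          rw [Sym2.eq_iff] at hab
          rcases hab with ⟨rfl, rfl⟩ | ⟨rfl, rfl⟩
          · exact huVd (hVsub ha)
          · exact hv'.1 ha
      · -- v ∈ W, u ∉ W : edge in E''
        right
        rw [hE'']
        have hvW' : v ∈ W := not_not.mp hvW
        exact ⟨heG, v, u, Sym2.eq_swap.symm, hvW', huW⟩
    · ext x
      simp only [Set.mem_inter_iff, Set.mem_union, Set.mem_compl_iff]
      constructor
      · rintro ⟨⟨hxW, hxV⟩, hxT⟩
        rcases hxV with h | h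
        · exact ⟨h, hxT⟩
        · -- x ∉ Vd, x ∈ T ⟹ x ∈ T \ Vd = W ∩ T ⟹ x ∈ W, contra
          exact absurd (((Set.ext_iff.mp hWT x).mpr ⟨hxT, h⟩).1) hxW
      · rintro ⟨hxV', hxT⟩
        have hxW : x ∉ W := fun hxW =>
          ((Set.ext_iff.mp hWT x).mp ⟨hxW, hxT⟩).2 (hVsub hxV')
        exact ⟨⟨hxW, Or.inl hxV'⟩, hxT⟩
end

section
/- Let G = (V, E) be a connected graph, T ⊆ V, (V', V∖V') a cut of G, and V* ⊆ V a vertex set such that G[V*] is connected and E' = ∂_G(V') ∩ E(G[V*]) is nonempty (the edges of the cut-set lying inside G[V*]). Let E'' be a set of edges of G[V*] inducing a cut of G[V*] that partitions (T ∪ End(∂_G(V*))) ∩ V* the same way that the cut induced by E' on G[V*] does. Then (∂_G(V') ∖ E') ∪ E'' induces a cut of G that partitions T the same way as (V', V∖V') does. -/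
open SimpleGraph

private lemma mem_ecut_iff' {V : Type*} (G : SimpleGraph V) (A : Set V) (a b : V) :
    s(a,b) ∈ ecut G A ↔ G.Adj a b ∧ ¬(a ∈ A ↔ b ∈ A) := by
  constructor
  · rintro ⟨he, u, v, huv, hu, hv⟩
    refine ⟨he, ?_⟩
    rw [Sym2.eq_iff] at huv
    rcases huv with ⟨rfl, rfl⟩ | ⟨rfl, rfl⟩ <;> tauto
  · rintro ⟨hadj, h⟩
    refine ⟨hadj, ?_⟩
    by_cases ha : a ∈ A
    · exact ⟨a, b, rfl, ha, fun hb => h ⟨fun _ => hb, fun _ => ha⟩⟩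
    · refine ⟨b, a, Sym2.eq_swap.symm, ?_, ha⟩
      by_contra hb; exact h ⟨fun h' => absurd h' ha, fun h' => absurd h' hb⟩

private lemma mem_edgesWithin_iff' {V : Type*} (A : Set V) (a b : V) :
    s(a,b) ∈ edgesWithin A ↔ a ∈ A ∧ b ∈ A := by
  constructor
  · intro h; exact ⟨h a (Sym2.mem_mk_left a b), h b (Sym2.mem_mk_right a b)⟩
  · rintro ⟨ha, hb⟩ x hx
    rcases Sym2.mem_iff.1 hx with rfl | rfl <;> assumption

private lemma ecut_eq_aux {V : Type*} (G : SimpleGraph V) (V' Vstar W Q : Set V)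
    (hin : ∀ x ∈ Vstar, (x ∈ Q ↔ x ∈ W))
    (hout : ∀ a b : V, G.Adj a b → ¬(a ∈ Vstar ∧ b ∈ Vstar) →
      ((a ∈ Q ↔ b ∈ Q) ↔ (a ∈ V' ↔ b ∈ V'))) :
    ecut G Q = (ecut G V' \ (ecut G V' ∩ edgesWithin Vstar)) ∪
      (ecut G W ∩ edgesWithin Vstar) := by
  ext e
  induction e using Sym2.ind with
  | _ a b =>
    simp only [Set.mem_union, Set.mem_diff, Set.mem_inter_iff, mem_ecut_iff',
      mem_edgesWithin_iff']
    by_cases hab : G.Adj a b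
    · simp only [hab, true_and]
      by_cases hV : a ∈ Vstar ∧ b ∈ Vstar
      · rw [hin a hV.1, hin b hV.2]
        have h1 := hV.1
        have h2 := hV.2
        tauto
      · rw [hout a b hab hV]
        tauto
    · simp only [hab, false_and]
      tauto

/-- Let `(V', V'ᶜ)` be a cut of the connected graph `G`, `Vstar` a vertex set inducing a
connected subgraph such that `E' = ∂_G(V') ∩ E(G[Vstar])` is nonempty, and let
`E''` be the cut-set (inside `G[Vstar]`) of a cut of `G[Vstar]` with side `W ⊆ Vstar` that
partitions `(T ∪ End(∂_G(Vstar))) ∩ Vstar` the same way the cut induced by `E'` on `G[Vstar]`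
does. Then `(∂_G(V') ∖ E') ∪ E''` induces a cut of `G` partitioning `T` the same way
as `(V', V'ᶜ)` does. -/
theorem statement_5 {V : Type*} [Fintype V] [DecidableEq V]
    (G : SimpleGraph V) (hG : G.Connected) (T V' Vstar W : Set V)
    (E'' : Set (Sym2 V))
    (hstarconn : (G.induce Vstar).Connected)
    (hE'ne : (ecut G V' ∩ edgesWithin Vstar).Nonempty)
    (hWsub : W ⊆ Vstar)
    (hE'' : E'' = ecut G W ∩ edgesWithin Vstar)
    (hWpart : W ∩ ((T ∪ endpts (ecut G Vstar)) ∩ Vstar)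
        = V' ∩ ((T ∪ endpts (ecut G Vstar)) ∩ Vstar) ∨
      W ∩ ((T ∪ endpts (ecut G Vstar)) ∩ Vstar)
        = ((T ∪ endpts (ecut G Vstar)) ∩ Vstar) \ V') :
    ∃ Q : Set V, ecut G Q = (ecut G V' \ (ecut G V' ∩ edgesWithin Vstar)) ∪ E'' ∧
      (Q ∩ T = V' ∩ T ∨ Q ∩ T = T \ V') := by
  subst hE''
  have hcross : ∀ a b : V, G.Adj a b → a ∈ Vstar → b ∉ Vstar →
      a ∈ endpts (ecut G Vstar) := fun a b hab ha hb =>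
    ⟨s(a,b), (mem_ecut_iff' G Vstar a b).2 ⟨hab, by tauto⟩, Sym2.mem_mk_left a b⟩
  rcases hWpart with h | h
  · -- Q agrees with W on Vstar and with V' outside
    have hkey : ∀ x ∈ (T ∪ endpts (ecut G Vstar)) ∩ Vstar, (x ∈ W ↔ x ∈ V') := by
      intro x hx
      have := Set.ext_iff.1 h x
      simp only [Set.mem_inter_iff] at this
      tauto
    set Q : Set V := (V' \ Vstar) ∪ W with hQdef
    have hin : ∀ x ∈ Vstar, (x ∈ Q ↔ x ∈ W) := by
      intro x hx
      rw [hQdef]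
      simp only [Set.mem_union, Set.mem_diff, hx]
      tauto
    have houtpt : ∀ x ∉ Vstar, (x ∈ Q ↔ x ∈ V') := by
      intro x hx
      rw [hQdef]
      simp only [Set.mem_union, Set.mem_diff, hx]
      have := fun hw : x ∈ W => hx (hWsub hw)
      tauto
    have hinpt : ∀ x ∈ Vstar, x ∈ endpts (ecut G Vstar) → (x ∈ Q ↔ x ∈ V') := by
      intro x hx hxe
      rw [hin x hx]
      exact hkey x ⟨Or.inr hxe, hx⟩
    refine ⟨Q, ecut_eq_aux G V' Vstar W Q hin ?_, Or.inl ?_⟩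
    · intro a b hab hV
      by_cases ha : a ∈ Vstar <;> by_cases hb : b ∈ Vstar
      · exact absurd ⟨ha, hb⟩ hV
      · rw [hinpt a ha (hcross a b hab ha hb), houtpt b hb]
      · rw [houtpt a ha, hinpt b hb (hcross b a hab.symm hb ha)]
      · rw [houtpt a ha, houtpt b hb]
    · ext x
      simp only [Set.mem_inter_iff]
      by_cases hx : x ∈ Vstar
      · rw [hin x hx]
        constructor
        · rintro ⟨h1, h2⟩; exact ⟨(hkey x ⟨Or.inl h2, hx⟩).1 h1, h2⟩
        · rintro ⟨h1, h2⟩; exact ⟨(hkey x ⟨Or.inl h2, hx⟩).2 h1, h2⟩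
      · rw [houtpt x hx]
  · -- Q agrees with W on Vstar and with V'ᶜ outside
    have hkey : ∀ x ∈ (T ∪ endpts (ecut G Vstar)) ∩ Vstar, (x ∈ W ↔ x ∉ V') := by
      intro x hx
      have := Set.ext_iff.1 h x
      simp only [Set.mem_inter_iff, Set.mem_diff] at this
      tauto
    set Q : Set V := (Vstarᶜ \ V') ∪ W with hQdef
    have hin : ∀ x ∈ Vstar, (x ∈ Q ↔ x ∈ W) := by
      intro x hx
      rw [hQdef]
      simp only [Set.mem_union, Set.mem_diff, Set.mem_compl_iff, hx]
      tauto
    have houtpt : ∀ x ∉ Vstar, (x ∈ Q ↔ x ∉ V') := by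
      intro x hx
      rw [hQdef]
      simp only [Set.mem_union, Set.mem_diff, Set.mem_compl_iff, hx]
      have := fun hw : x ∈ W => hx (hWsub hw)
      tauto
    have hinpt : ∀ x ∈ Vstar, x ∈ endpts (ecut G Vstar) → (x ∈ Q ↔ x ∉ V') := by
      intro x hx hxe
      rw [hin x hx]
      exact hkey x ⟨Or.inr hxe, hx⟩
    refine ⟨Q, ecut_eq_aux G V' Vstar W Q hin ?_, Or.inr ?_⟩
    · intro a b hab hV
      by_cases ha : a ∈ Vstar <;> by_cases hb : b ∈ Vstar
      · exact absurd ⟨ha, hb⟩ hV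
      · rw [hinpt a ha (hcross a b hab ha hb), houtpt b hb]; tauto
      · rw [houtpt a ha, hinpt b hb (hcross b a hab.symm hb ha)]; tauto
      · rw [houtpt a ha, houtpt b hb]; tauto
    · ext x
      simp only [Set.mem_inter_iff, Set.mem_diff]
      by_cases hx : x ∈ Vstar
      · rw [hin x hx]
        constructor
        · rintro ⟨h1, h2⟩; exact ⟨h2, (hkey x ⟨Or.inl h2, hx⟩).1 h1⟩
        · rintro ⟨h1, h2⟩; exact ⟨(hkey x ⟨Or.inl h1, hx⟩).2 h2, h1⟩
      · rw [houtpt x hx]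
        tauto
end

section
/- Let G = (V, E) be a connected graph and S ⊆ V. Let (E₁, V₁) and (E₂, V₂) be two S-equivalent (t,c)-realizable pairs such that V₁ ∩ S ≠ ∅, V₂ ∩ S ≠ ∅, and the cuts induced by E₁ and E₂ both partition S into S' and S∖S' for some ∅ ⊊ S' ⊊ S. Then V₁ ∩ V₂ ≠ ∅. -/
open SimpleGraph

lemma cross_walk {V : Type*} {G : SimpleGraph V} {B : Set V} :
    ∀ {x y : V}, G.Walk x y → x ∈ B → y ∉ B →
      ∃ u v, G.Adj u v ∧ u ∈ B ∧ v ∉ B := by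
  intro x y w
  induction w with
  | nil => intro hx hy; exact absurd hx hy
  | @cons a b c h p ih =>
    intro hx hy
    by_cases hb : b ∈ B
    · exact ih hb hy
    · exact ⟨a, b, h, hx, hb⟩

lemma cross_induce {V : Type*} {G : SimpleGraph V} {A B : Set V}
    (hA : (G.induce A).Connected) {x y : V} (hx : x ∈ A) (hy : y ∈ A)
    (hxB : x ∈ B) (hyB : y ∉ B) :
    ∃ u v, G.Adj u v ∧ u ∈ A ∧ v ∈ A ∧ u ∈ B ∧ v ∉ B := by
  obtain ⟨w⟩ := hA.preconnected ⟨x, hx⟩ ⟨y, hy⟩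
  obtain ⟨u, v, huv, hu, hv⟩ := cross_walk (B := Subtype.val ⁻¹' B) w hxB hyB
  exact ⟨u, v, huv, u.2, v.2, hu, hv⟩

lemma mem_ecut_of_adj {V : Type*} {G : SimpleGraph V} {A : Set V} {u v : V}
    (h : G.Adj u v) (hu : u ∈ A) (hv : v ∉ A) : s(u, v) ∈ ecut G A :=
  ⟨h, u, v, rfl, hu, hv⟩

lemma ecut_endpoint {V : Type*} {G : SimpleGraph V} {A : Set V} {u v : V}
    (h : s(u, v) ∈ ecut G A) : (u ∈ A ∧ v ∉ A) ∨ (v ∈ A ∧ u ∉ A) := by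
  obtain ⟨-, a, b, heq, ha, hb⟩ := h
  rw [Sym2.eq_iff] at heq
  rcases heq with ⟨rfl, rfl⟩ | ⟨rfl, rfl⟩
  · exact Or.inl ⟨ha, hb⟩
  · exact Or.inr ⟨ha, hb⟩

/-- If `(E₁, V₁)` and `(E₂, V₂)` are two `S`-equivalent `(t, c)`-realizable pairs (witnessed
by the atomic cuts `(L₁, L₁ᶜ)` and `(L₂, L₂ᶜ)` induced by `E₁`, `E₂` with `Vᵢ ⊆ Lᵢ` and
`L₁ ∩ S = L₂ ∩ S`) such that `V₁ ∩ S ≠ ∅`, `V₂ ∩ S ≠ ∅`, and the induced cuts partition `S`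
into `S'` and `S ∖ S'` for some `∅ ⊊ S' ⊊ S`, then `V₁ ∩ V₂ ≠ ∅`. -/
theorem statement_8 {V : Type*} [Fintype V] [DecidableEq V]
    (G : SimpleGraph V) (hG : G.Connected)
    (S V₁ V₂ L₁ L₂ S' : Set V) (E₁ E₂ : Set (Sym2 V)) (t c : ℕ)
    (h1conn : (G.induce V₁).Connected) (h1t : V₁.ncard ≤ t) (h1c : (ecut G V₁).ncard ≤ c)
    (h1sub : E₁ ⊆ ecut G V₁) (hL1 : E₁ = ecut G L₁) (hL1a : AtomicCut G L₁) (hL1v : V₁ ⊆ L₁)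
    (h2conn : (G.induce V₂).Connected) (h2t : V₂.ncard ≤ t) (h2c : (ecut G V₂).ncard ≤ c)
    (h2sub : E₂ ⊆ ecut G V₂) (hL2 : E₂ = ecut G L₂) (hL2a : AtomicCut G L₂) (hL2v : V₂ ⊆ L₂)
    (hequiv : L₁ ∩ S = L₂ ∩ S)
    (hpart1 : L₁ ∩ S = S') (hS'sub : S' ⊆ S) (hS'ne : S'.Nonempty) (hS'pr : S' ≠ S)
    (h1S : (V₁ ∩ S).Nonempty) (h2S : (V₂ ∩ S).Nonempty) :
    (V₁ ∩ V₂).Nonempty := by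
  
  by_contra hcon
  rw [Set.not_nonempty_iff_eq_empty] at hcon
  have hdisj : ∀ x, x ∈ V₁ → x ∈ V₂ → False := by
    intro x h1 h2
    have hx : x ∈ V₁ ∩ V₂ := ⟨h1, h2⟩
    rw [hcon] at hx
    exact hx
  have hE1 : ecut G L₁ ⊆ ecut G V₁ := by rw [← hL1]; exact h1sub
  have hE2 : ecut G L₂ ⊆ ecut G V₂ := by rw [← hL2]; exact h2sub
  obtain ⟨s₁, hs₁V, hs₁S⟩ := h1S
  obtain ⟨s₂, hs₂V, hs₂S⟩ := h2S
  have hs₁L1 : s₁ ∈ L₁ := hL1v hs₁V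
  have hs₂L2 : s₂ ∈ L₂ := hL2v hs₂V
  have hs₁L2 : s₁ ∈ L₂ := by
    have h : s₁ ∈ L₁ ∩ S := ⟨hs₁L1, hs₁S⟩
    rw [hequiv] at h; exact h.1
  have hs₂L1 : s₂ ∈ L₁ := by
    have h : s₂ ∈ L₂ ∩ S := ⟨hs₂L2, hs₂S⟩
    rw [← hequiv] at h; exact h.1
  obtain ⟨s, hsS, hsS'⟩ : ∃ s, s ∈ S ∧ s ∉ S' := by
    by_contra h; push_neg at h
    exact hS'pr (Set.Subset.antisymm hS'sub h)
  have hsL1 : s ∉ L₁ := by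
    intro h
    exact hsS' (hpart1 ▸ (⟨h, hsS⟩ : s ∈ L₁ ∩ S))
  have hsL2 : s ∉ L₂ := by
    intro h
    have h2 : s ∈ L₂ ∩ S := ⟨h, hsS⟩
    rw [← hequiv] at h2
    exact hsS' (hpart1 ▸ h2)
  have hV2L1 : V₂ ⊆ L₁ := by
    intro w hw
    by_contra hwL
    obtain ⟨u, v, huv, huV, hvV, huL, hvL⟩ :=
      cross_induce h2conn hs₂V hw hs₂L1 hwL
    have hcut := hE1 (mem_ecut_of_adj huv huL hvL)
    rcases ecut_endpoint hcut with ⟨h1, -⟩ | ⟨h1, -⟩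
    · exact hdisj u h1 huV
    · exact hdisj v h1 hvV
  have hV1L2 : V₁ ⊆ L₂ := by
    intro w hw
    by_contra hwL
    obtain ⟨u, v, huv, huV, hvV, huL, hvL⟩ :=
      cross_induce h1conn hs₁V hw hs₁L2 hwL
    have hcut := hE2 (mem_ecut_of_adj huv huL hvL)
    rcases ecut_endpoint hcut with ⟨h1, -⟩ | ⟨h1, -⟩
    · exact hdisj u huV h1
    · exact hdisj v hvV h1
  have key1 : ∀ u v, G.Adj u v → u ∈ L₁ → v ∉ L₁ → v ∈ L₂ := by
    intro u v huv hu hv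
    have hcut := hE1 (mem_ecut_of_adj huv hu hv)
    have huV1 : u ∈ V₁ := by
      rcases ecut_endpoint hcut with ⟨h1, -⟩ | ⟨h1, -⟩
      · exact h1
      · exact absurd (hL1v h1) hv
    by_contra hvL2
    have hcut2 := hE2 (mem_ecut_of_adj huv (hV1L2 huV1) hvL2)
    rcases ecut_endpoint hcut2 with ⟨h2, -⟩ | ⟨h2, -⟩
    · exact hdisj u huV1 h2
    · exact absurd (hV2L1 h2) hv
  have key2 : ∀ u v, G.Adj u v → u ∈ L₂ → v ∉ L₂ → v ∈ L₁ := by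
    intro u v huv hu hv
    have hcut := hE2 (mem_ecut_of_adj huv hu hv)
    have huV2 : u ∈ V₂ := by
      rcases ecut_endpoint hcut with ⟨h1, -⟩ | ⟨h1, -⟩
      · exact h1
      · exact absurd (hL2v h1) hv
    by_contra hvL1
    have hcut2 := hE1 (mem_ecut_of_adj huv (hV2L1 huV2) hvL1)
    rcases ecut_endpoint hcut2 with ⟨h2, -⟩ | ⟨h2, -⟩
    · exact hdisj u h2 huV2
    · exact absurd (hV1L2 h2) hv
  obtain ⟨u, v, huv, huL, hvL⟩ :=
    cross_walk ((hG.preconnected s₁ s).some) hs₁L1 hsL1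
  have hvL2 : v ∈ L₂ := key1 u v huv huL hvL
  obtain ⟨a, b, hab, haC, hbC, haL2, hbL2⟩ :=
    cross_induce hL1a.2 (show v ∈ L₁ᶜ from hvL) (show s ∈ L₁ᶜ from hsL1) hvL2 hsL2
  exact hbC (key2 a b hab haL2 hbL2)
end

section
/- Let G = (V, E) be a graph and P a φ-expander decomposition of Simple(G) for some 0 < φ < 1, and let c be a positive integer. Then any (P, ⌈c/φ⌉, c)-cut partition Q of G is a (P, c)-edge connectivity equivalent partition of G. Concretely, the key step is: if P is a part of P such that Simple(G[P]) is a φ-expander and (V', P∖V') is a cut of G[P] of size at most c, then min(vol(V'), vol(P∖V')) ≤ c/φ in Simple(G[P]), so one of (V', P∖V') or (P∖V', V') is a (⌈c/φ⌉, c)-cut of G[P]. -/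
open SimpleGraph

/-- The simple graph underlying a multigraph given by an edge-multiplicity function `w`. -/
def mgraph {V : Type*} (w : V → V → ℕ) : SimpleGraph V where
  Adj u v := u ≠ v ∧ (w u v ≠ 0 ∨ w v u ≠ 0)
  symm := by
    constructor
    rintro u v ⟨hne, h⟩
    exact ⟨hne.symm, h.symm⟩
  loopless := by
    constructor
    rintro v ⟨hne, -⟩
    exact hne rfl

open Classical in
/-- The total multiplicity of edges crossing the cut `(A, Aᶜ)` in the multigraph `w`. -/
noncomputable def cutWeight {V : Type*} [Fintype V] (w : V → V → ℕ) (A : Set V) : ℕ :=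
  ∑ u : V, ∑ v : V, if u ∈ A ∧ v ∉ A then w u v else 0

open Classical in
/-- The total multiplicity of edges of the induced sub-multigraph on `P` crossing the cut
`(A, P ∖ A)`. -/
noncomputable def cutWeightIn {V : Type*} [Fintype V] (w : V → V → ℕ) (P A : Set V) : ℕ :=
  ∑ u : V, ∑ v : V, if u ∈ A ∧ v ∈ P \ A then w u v else 0

/-- The boundary terminals of a cluster `P`: vertices of `P` incident to an edge leaving `P`,
i.e. `End(∂_G(P)) ∩ P`. -/
def mgBoundary {V : Type*} (w : V → V → ℕ) (P : Set V) : Set V :=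
  {x | x ∈ P ∧ ∃ y, y ∉ P ∧ (mgraph w).Adj x y}

/-- The size of a minimum cut of the multigraph `w` separating `x` from `y`. -/
noncomputable def minCutSep {V : Type*} [Fintype V] (w : V → V → ℕ) (x y : V) : ℕ :=
  sInf {n | ∃ A : Set V, x ∈ A ∧ y ∉ A ∧ cutWeight w A = n}

/-- `Qa` is a `(Pa, c)`-edge connectivity equivalent partition of the multigraph `w`:
`Qa` is a partition with connected clusters refining `Pa`, and for every cluster `P ∈ Pa`
with terminal set `T = End(∂(P)) ∩ P` and every nontrivial bipartition `(T', T ∖ T')` whose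
minimum cut in `G[P]` has size at most `c`, the intercluster edges of `Qa` contain the
cut-set of a minimum cut of `G[P]` partitioning `T` into `T'` and `T ∖ T'`. -/
noncomputable def IsEquivPartition {V : Type*} [Fintype V] (w : V → V → ℕ)
    (Pa Qa : Set (Set V)) (c : ℕ) : Prop :=
  IsVertexPartition Qa ∧
  (∀ Q ∈ Qa, ((mgraph w).induce Q).Connected) ∧
  (∀ Q ∈ Qa, ∃ P ∈ Pa, Q ⊆ P) ∧
  ∀ P ∈ Pa, ∀ T' : Set V,
    T' ⊆ mgBoundary w P → T'.Nonempty → T' ≠ mgBoundary w P →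
    sInf {n | ∃ A : Set V, A ⊆ P ∧ A ∩ mgBoundary w P = T' ∧ cutWeightIn w P A = n} ≤ c →
    ∃ A : Set V, A ⊆ P ∧ A ∩ mgBoundary w P = T' ∧
      cutWeightIn w P A
        = sInf {n | ∃ B : Set V, B ⊆ P ∧ B ∩ mgBoundary w P = T' ∧ cutWeightIn w P B = n} ∧
      ∀ u v : V, u ∈ A → v ∈ P \ A → (mgraph w).Adj u v → ∀ Q ∈ Qa, ¬(u ∈ Q ∧ v ∈ Q)

open Classical in
/-- The volume of `A` inside the induced subgraph `H[P]`: the sum over `v ∈ A` of the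
number of neighbors of `v` within `P`. -/
noncomputable def volIn {V : Type*} [Fintype V] (H : SimpleGraph V) (P A : Set V) : ℕ :=
  ∑ v : V, if v ∈ A then ({u | u ∈ P ∧ H.Adj v u}).ncard else 0

/-- The cut-set of the cut `(A, P ∖ A)` of the induced subgraph `H[P]` (for `A ⊆ P`). -/
def ecutIn {V : Type*} (H : SimpleGraph V) (P A : Set V) : Set (Sym2 V) :=
  {e | e ∈ H.edgeSet ∧ ∃ u v, e = s(u, v) ∧ u ∈ A ∧ v ∈ P \ A}

/-- The induced subgraph `H[P]` is a `φ`-expander: every nontrivial cut `(A, P ∖ A)` has at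
least `φ · min(vol(A), vol(P ∖ A))` cut edges. -/
def IsExpanderOn {V : Type*} [Fintype V] (H : SimpleGraph V) (P : Set V) (φ : ℝ) : Prop :=
  ∀ A : Set V, A ⊆ P → A.Nonempty → (P \ A).Nonempty →
    φ * min (volIn H P A : ℝ) (volIn H P (P \ A) : ℝ) ≤ ((ecutIn H P A).ncard : ℝ)

/-- `Qa` is a `(Pa, t, c)`-cut partition of the multigraph `w`: `Qa` is a partition with
connected clusters refining `Pa`, and for each cluster `P ∈ Pa` with terminals
`T = End(∂(P)) ∩ P`, for every nonempty `T' ⊆ T` admitting a `(T', T ∖ T', t, c)`-cut, there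
is a cut of `G[P]` partitioning `T` into `T'` and `T ∖ T'` of size at most the minimum size
of a `(T', T ∖ T', t, c)`-cut, all of whose cut edges are intercluster with respect to `Qa`. -/
noncomputable def IsCutPartition {V : Type*} [Fintype V] (w : V → V → ℕ)
    (Pa Qa : Set (Set V)) (t c : ℕ) : Prop :=
  IsVertexPartition Qa ∧
  (∀ Q ∈ Qa, ((mgraph w).induce Q).Connected) ∧
  (∀ Q ∈ Qa, ∃ P ∈ Pa, Q ⊆ P) ∧
  ∀ P ∈ Pa, ∀ T' : Set V, T' ⊆ mgBoundary w P → T'.Nonempty →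
    (∃ A : Set V, A ⊆ P ∧ A ∩ mgBoundary w P = T' ∧ A.ncard ≤ t ∧ cutWeightIn w P A ≤ c) →
    ∃ B : Set V, B ⊆ P ∧ B ∩ mgBoundary w P = T' ∧
      cutWeightIn w P B ≤ sInf {n | ∃ A : Set V, A ⊆ P ∧ A ∩ mgBoundary w P = T' ∧
        A.ncard ≤ t ∧ cutWeightIn w P A ≤ c ∧ cutWeightIn w P A = n} ∧
      ∀ u v : V, u ∈ B → v ∈ P \ B → (mgraph w).Adj u v → ∀ Q ∈ Qa, ¬(u ∈ Q ∧ v ∈ Q)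

section Helpers

variable {V : Type*} [Fintype V]

private lemma mem_iff_of_diff_eq {A B I : Set V} (hAB : A \ I = B \ I) {x : V}
    (hx : x ∉ I) : x ∈ A ↔ x ∈ B := by
  constructor
  · intro h
    have h2 : x ∈ A \ I := ⟨h, hx⟩
    rw [hAB] at h2; exact h2.1
  · intro h
    have h2 : x ∈ B \ I := ⟨h, hx⟩
    rw [← hAB] at h2; exact h2.1

private lemma not_adj_iso (w : V → V → ℕ) (hsymm : ∀ u v, w u v = w v u)
    {P : Set V} {x y : V} (hx : ∀ z ∈ P, w x z = 0) (hy : y ∈ P) :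
    ¬ (mgraph w).Adj x y := by
  rintro ⟨-, h | h⟩
  · exact h (hx y hy)
  · exact h ((hsymm y x).trans (hx y hy))

private lemma cw_compl (w : V → V → ℕ) (hsymm : ∀ u v, w u v = w v u)
    (P A : Set V) (hA : A ⊆ P) :
    cutWeightIn w P (P \ A) = cutWeightIn w P A := by
  classical
  unfold cutWeightIn
  rw [Finset.sum_comm]
  refine Finset.sum_congr rfl fun u _ => Finset.sum_congr rfl fun v _ => ?_
  by_cases hcond : u ∈ A ∧ v ∈ P \ A
  · rw [if_pos ⟨hcond.2, (Set.diff_diff_cancel_left hA).symm ▸ hcond.1⟩, if_pos hcond, hsymm]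
  · rw [if_neg (fun h => hcond ⟨(Set.diff_diff_cancel_left hA) ▸ h.2, h.1⟩), if_neg hcond]

private lemma cw_congr_iso (w : V → V → ℕ) (hsymm : ∀ u v, w u v = w v u)
    (P A B : Set V) (hA : A ⊆ P) (hB : B ⊆ P)
    (hAB : A \ {x | ∀ y ∈ P, w x y = 0} = B \ {x | ∀ y ∈ P, w x y = 0}) :
    cutWeightIn w P A = cutWeightIn w P B := by
  classical
  unfold cutWeightIn
  refine Finset.sum_congr rfl fun u _ => Finset.sum_congr rfl fun v _ => ?_
  by_cases hu : ∀ y ∈ P, w u y = 0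
  · have h1 : ∀ C : Set V, (if u ∈ C ∧ v ∈ P \ C then w u v else 0) = 0 := by
      intro C; split_ifs with h
      · exact hu v h.2.1
      · rfl
    rw [h1, h1]
  by_cases hv : ∀ y ∈ P, w v y = 0
  · have h1 : ∀ C : Set V, C ⊆ P → (if u ∈ C ∧ v ∈ P \ C then w u v else 0) = 0 := by
      intro C hC; split_ifs with h
      · rw [hsymm]; exact hv u (hC h.1)
      · rfl
    rw [h1 A hA, h1 B hB]
  · have hu' : u ∈ A ↔ u ∈ B := mem_iff_of_diff_eq hAB hu
    have hv' : v ∈ A ↔ v ∈ B := mem_iff_of_diff_eq hAB hv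
    refine if_congr ?_ rfl rfl
    simp only [Set.mem_diff]
    tauto

private lemma volIn_congr_iso (w : V → V → ℕ) (hsymm : ∀ u v, w u v = w v u)
    (P A B : Set V)
    (hAB : A \ {x | ∀ y ∈ P, w x y = 0} = B \ {x | ∀ y ∈ P, w x y = 0}) :
    volIn (mgraph w) P A = volIn (mgraph w) P B := by
  classical
  unfold volIn
  refine Finset.sum_congr rfl fun v _ => ?_
  by_cases hv : ∀ y ∈ P, w v y = 0
  · have hempty : {u | u ∈ P ∧ (mgraph w).Adj v u} = ∅ := by
      ext u
      simp only [Set.mem_setOf_eq, Set.mem_empty_iff_false, iff_false, not_and]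
      intro huP hadj
      exact not_adj_iso w hsymm hv huP hadj
    rw [hempty]
    simp
  · exact if_congr (mem_iff_of_diff_eq hAB hv) rfl rfl

private lemma ncard_le_volIn (w : V → V → ℕ) (hsymm : ∀ u v, w u v = w v u)
    (hirr : ∀ v, w v v = 0) (P A : Set V) (hA : A ⊆ P)
    (hniso : ∀ x ∈ A, ¬ (∀ y ∈ P, w x y = 0)) :
    A.ncard ≤ volIn (mgraph w) P A := by
  classical
  have h1 : A.ncard = ∑ v : V, if v ∈ A then 1 else 0 := by
    have h2 : A.ncard = (Finset.univ.filter (· ∈ A)).card := by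
      rw [Set.ncard_eq_toFinset_card']
      congr 1
      ext x
      simp
    rw [h2, Finset.card_filter]
  rw [h1]
  unfold volIn
  refine Finset.sum_le_sum fun v _ => ?_
  split_ifs with h
  · have hne : {u | u ∈ P ∧ (mgraph w).Adj v u}.Nonempty := by
      have := hniso v h
      push_neg at this
      obtain ⟨y, hyP, hy⟩ := this
      have hvy : v ≠ y := by
        rintro rfl
        exact hy (hirr v)
      exact ⟨y, hyP, hvy, Or.inl hy⟩
    exact (Set.ncard_pos (Set.toFinite _)).mpr hne
  · exact le_refl 0

private lemma ecutIn_ncard_le_cw (w : V → V → ℕ) (hsymm : ∀ u v, w u v = w v u)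
    (P A : Set V) :
    (ecutIn (mgraph w) P A).ncard ≤ cutWeightIn w P A := by
  classical
  set cond : V × V → Prop :=
    fun p => (mgraph w).Adj p.1 p.2 ∧ p.1 ∈ A ∧ p.2 ∈ P \ A with hcond
  have hsub : ecutIn (mgraph w) P A ⊆ (fun p : V × V => s(p.1, p.2)) '' {p | cond p} := by
    rintro e ⟨he, u, v, rfl, hu, hv⟩
    exact ⟨(u, v), ⟨(mgraph w).mem_edgeSet.mp he, hu, hv⟩, rfl⟩
  have h1 : (ecutIn (mgraph w) P A).ncard ≤ {p : V × V | cond p}.ncard :=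
    le_trans (Set.ncard_le_ncard hsub (Set.toFinite _)) (Set.ncard_image_le (Set.toFinite _))
  refine h1.trans ?_
  have h2 : {p : V × V | cond p}.ncard
      = ∑ u : V, ∑ v : V, if cond (u, v) then 1 else 0 := by
    have h3 : {p : V × V | cond p}.ncard = (Finset.univ.filter cond).card := by
      rw [Set.ncard_eq_toFinset_card']
      congr 1
      ext p
      simp
    rw [h3, Finset.card_filter, Fintype.sum_prod_type]
  rw [h2]
  unfold cutWeightIn
  refine Finset.sum_le_sum fun u _ => Finset.sum_le_sum fun v _ => ?_
  split_ifs with hp hq hq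
  · rcases hp.1.2 with h | h
    · exact Nat.pos_of_ne_zero h
    · exact Nat.pos_of_ne_zero (by rw [hsymm]; exact h)
  · exact absurd hp.2 hq
  · exact Nat.zero_le _
  · exact Nat.zero_le _

private lemma one_le_cw (w : V → V → ℕ) (hsymm : ∀ u v, w u v = w v u)
    (P A : Set V) {u v : V}
    (hu : u ∈ A) (hv : v ∈ P \ A) (hadj : (mgraph w).Adj u v) :
    1 ≤ cutWeightIn w P A := by
  classical
  have hw : 1 ≤ w u v := by
    rcases hadj.2 with h | h
    · exact Nat.pos_of_ne_zero h
    · exact Nat.pos_of_ne_zero (by rw [hsymm]; exact h)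
  unfold cutWeightIn
  calc 1 ≤ (if u ∈ A ∧ v ∈ P \ A then w u v else 0) := by
        rw [if_pos ⟨hu, hv⟩]; exact hw
    _ ≤ ∑ v' : V, if u ∈ A ∧ v' ∈ P \ A then w u v' else 0 :=
        Finset.single_le_sum
          (f := fun v' => if u ∈ A ∧ v' ∈ P \ A then w u v' else 0)
          (fun i _ => Nat.zero_le _) (Finset.mem_univ v)
    _ ≤ ∑ u' : V, ∑ v' : V, if u' ∈ A ∧ v' ∈ P \ A then w u' v' else 0 :=
        Finset.single_le_sum
          (f := fun u' => ∑ v' : V, if u' ∈ A ∧ v' ∈ P \ A then w u' v' else 0)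
          (fun i _ => Nat.zero_le _) (Finset.mem_univ u)

private lemma cw_eq_zero (w : V → V → ℕ) (P A : Set V)
    (h : ∀ u ∈ A, ∀ v ∈ P \ A, w u v = 0) :
    cutWeightIn w P A = 0 := by
  classical
  unfold cutWeightIn
  refine Finset.sum_eq_zero fun u _ => Finset.sum_eq_zero fun v _ => ?_
  split_ifs with hc
  · exact h u hc.1 v hc.2
  · rfl

end Helpers

set_option maxHeartbeats 1000000 in
/-- If `Pa` is a `φ`-expander decomposition of `Simple(G)` for a multigraph `G` (given by the
symmetric multiplicity function `w`) with `0 < φ < 1`, then for any positive integer `c`,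
every `(Pa, ⌈c/φ⌉, c)`-cut partition of `G` is a `(Pa, c)`-edge connectivity equivalent
partition of `G`. -/

theorem statement_11 {V : Type*} [Fintype V] [DecidableEq V]
    (w : V → V → ℕ) (hsymm : ∀ u v, w u v = w v u) (hirr : ∀ v, w v v = 0)
    (Pa : Set (Set V)) (hPa : IsVertexPartition Pa)
    (φ : ℝ) (hφ0 : 0 < φ) (hφ1 : φ < 1)
    (hexp : ∀ P ∈ Pa, IsExpanderOn (mgraph w) P φ)
    (c : ℕ) (hc : 0 < c)
    (Qa : Set (Set V)) (hQ : IsCutPartition w Pa Qa ⌈(c : ℝ) / φ⌉₊ c) :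
    IsEquivPartition w Pa Qa c := by
  classical
  obtain ⟨hQpart, hQconn, hQref, hQcut⟩ := hQ
  refine ⟨hQpart, hQconn, hQref, ?_⟩
  intro P hP T' hT'bd hT'ne hT'neq hle
  set bd := mgBoundary w P with hbddef
  have hbdP : bd ⊆ P := fun x hx => hx.1
  set I : Set V := {x | ∀ y ∈ P, w x y = 0} with hIdef
  set S := {n | ∃ A : Set V, A ⊆ P ∧ A ∩ bd = T' ∧ cutWeightIn w P A = n} with hSdef
  have hSne : S.Nonempty :=
    ⟨_, T', hT'bd.trans hbdP, Set.inter_eq_self_of_subset_left hT'bd, rfl⟩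
  set α := sInf S with hαdef
  have hαS : α ∈ S := Nat.sInf_mem hSne
  obtain ⟨A₀, hA₀P, hA₀bd, hA₀cw⟩ := hαS
  have hαle : ∀ B : Set V, B ⊆ P → B ∩ bd = T' → α ≤ cutWeightIn w P B :=
    fun B h1 h2 => Nat.sInf_le ⟨B, h1, h2, rfl⟩
  have hαc : α ≤ c := hle
  by_cases hα0 : α = 0
  · refine ⟨A₀, hA₀P, hA₀bd, by rw [hA₀cw], ?_⟩
    intro u v hu hv hadj
    have h1 := one_le_cw w hsymm P A₀ hu hv hadj
    rw [hA₀cw, hα0] at h1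
    exact absurd h1 (by omega)
  -- α ≥ 1: both sides of the terminal bipartition contain non-isolated terminals
  have hT2ne : (T' \ I).Nonempty := by
    by_contra h
    rw [Set.not_nonempty_iff_eq_empty, Set.diff_eq_empty] at h
    have hcw : cutWeightIn w P T' = 0 :=
      cw_eq_zero w P T' (fun u hu v hv => h hu v hv.1)
    have := hαle T' (hT'bd.trans hbdP) (Set.inter_eq_self_of_subset_left hT'bd)
    omega
  have hT3ne : ((bd \ T') \ I).Nonempty := by
    by_contra h
    rw [Set.not_nonempty_iff_eq_empty, Set.diff_eq_empty] at h
    set A : Set V := (P \ I) ∪ (T' ∩ I) with hAdef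
    have hAP : A ⊆ P := by
      rintro x (hx | hx)
      · exact hx.1
      · exact hbdP (hT'bd hx.1)
    have hAbd : A ∩ bd = T' := by
      ext x
      constructor
      · rintro ⟨hx | hx, hxbd⟩
        · by_contra hxT
          exact hx.2 (h ⟨hxbd, hxT⟩)
        · exact hx.1
      · intro hx
        by_cases hxI : x ∈ I
        · exact ⟨Or.inr ⟨hx, hxI⟩, hT'bd hx⟩
        · exact ⟨Or.inl ⟨hbdP (hT'bd hx), hxI⟩, hT'bd hx⟩
    have hcw : cutWeightIn w P A = 0 := by
      refine cw_eq_zero w P A (fun u hu v hv => ?_)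
      have hvI : v ∈ I := by
        by_contra hvI
        exact hv.2 (Or.inl ⟨hv.1, hvI⟩)
      exact (hsymm u v).trans (hvI u (hAP hu))
    have := hαle A hAP hAbd
    omega
  -- the cleaned minimizer
  set A₂ : Set V := A₀ \ I with hA₂def
  have hA₂P : A₂ ⊆ P := fun x hx => hA₀P hx.1
  have hA₂bd : A₂ ∩ bd = T' \ I := by
    ext x
    have h0 : x ∈ A₀ ∩ bd ↔ x ∈ T' := by rw [hA₀bd]
    simp only [hA₂def, Set.mem_inter_iff, Set.mem_diff] at h0 ⊢
    tauto
  have hA₂iso : A₂ \ I = A₀ \ I := by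
    rw [hA₂def, Set.diff_diff]
    simp
  have hcwA₂ : cutWeightIn w P A₂ = α := by
    rw [cw_congr_iso w hsymm P A₂ A₀ hA₂P hA₀P hA₂iso, hA₀cw]
  have hA₂ne : A₂.Nonempty := by
    obtain ⟨x, hx⟩ := hT2ne
    have h0 : x ∈ A₀ ∩ bd ↔ x ∈ T' := by rw [hA₀bd]
    exact ⟨x, (h0.mpr hx.1).1, hx.2⟩
  have hPA₂ne : (P \ A₂).Nonempty := by
    obtain ⟨x, hx⟩ := hT3ne
    refine ⟨x, hbdP hx.1.1, fun hxA => ?_⟩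
    have : x ∈ T' \ I := hA₂bd ▸ (⟨hxA, hx.1.1⟩ : x ∈ A₂ ∩ bd)
    exact hx.1.2 this.1
  -- expander argument: one side has few vertices
  have hecut : ((ecutIn (mgraph w) P A₂).ncard : ℝ) ≤ (c : ℝ) := by
    have h1 := ecutIn_ncard_le_cw w hsymm P A₂
    rw [hcwA₂] at h1
    exact_mod_cast h1.trans hαc
  have hmin : min (volIn (mgraph w) P A₂ : ℝ) (volIn (mgraph w) P (P \ A₂) : ℝ)
      ≤ (c : ℝ) / φ := by
    rw [le_div_iff₀ hφ0, mul_comm]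
    exact (hexp P hP A₂ hA₂P hA₂ne hPA₂ne).trans hecut
  have hnat : ∀ n : ℕ, (n : ℝ) ≤ (c : ℝ) / φ → n ≤ ⌈(c : ℝ) / φ⌉₊ := by
    intro n h
    exact_mod_cast h.trans (Nat.le_ceil _)
  rcases le_total (volIn (mgraph w) P A₂ : ℝ) (volIn (mgraph w) P (P \ A₂) : ℝ) with hv | hv
  · -- small side is A₂ : apply the cut-partition property to T' \ I
    rw [min_eq_left hv] at hmin
    have hcard : A₂.ncard ≤ ⌈(c : ℝ) / φ⌉₊ := by
      refine le_trans ?_ (hnat _ hmin)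
      exact ncard_le_volIn w hsymm hirr P A₂ hA₂P (fun x hx => hx.2)
    have hT2sub : T' \ I ⊆ bd := fun x hx => hT'bd hx.1
    obtain ⟨B, hBP, hBbd, hBcw, hBcross⟩ :=
      hQcut P hP (T' \ I) hT2sub hT2ne
        ⟨A₂, hA₂P, hA₂bd, hcard, by rw [hcwA₂]; exact hαc⟩
    have hsinfle : sInf {n | ∃ A : Set V, A ⊆ P ∧ A ∩ mgBoundary w P = T' \ I ∧
        A.ncard ≤ ⌈(c : ℝ) / φ⌉₊ ∧ cutWeightIn w P A ≤ c ∧ cutWeightIn w P A = n} ≤ α :=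
      Nat.sInf_le ⟨A₂, hA₂P, hA₂bd, hcard, by rw [hcwA₂]; exact hαc, hcwA₂⟩
    set A : Set V := B ∪ (T' ∩ I) with hAdef
    have hAP : A ⊆ P := by
      rintro x (hx | hx)
      · exact hBP hx
      · exact hbdP (hT'bd hx.1)
    have hAbd : A ∩ bd = T' := by
      ext x
      have h1 : x ∈ B ∩ bd ↔ x ∈ T' \ I := by rw [← hbddef] at hBbd; rw [hBbd]
      have h2 : x ∈ T' → x ∈ bd := fun h => hT'bd h
      simp only [hAdef, Set.mem_inter_iff, Set.mem_union, Set.mem_diff] at h1 ⊢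
      tauto
    have hAiso : A \ I = B \ I := by
      rw [hAdef]
      ext x
      simp only [Set.mem_diff, Set.mem_union, Set.mem_inter_iff]
      tauto
    have hAcw : cutWeightIn w P A = α := by
      have h1 : cutWeightIn w P A = cutWeightIn w P B :=
        cw_congr_iso w hsymm P A B hAP hBP hAiso
      have h2 : cutWeightIn w P A ≤ α := by rw [h1]; exact hBcw.trans hsinfle
      exact le_antisymm h2 (hαle A hAP hAbd)
    refine ⟨A, hAP, hAbd, hAcw, ?_⟩
    intro u v hu hv hadj
    have huB : u ∈ B := by
      rcases hu with hu | hu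
      · exact hu
      · exact absurd hadj (not_adj_iso w hsymm hu.2 hv.1)
    exact hBcross u v huB ⟨hv.1, fun hvB => hv.2 (Or.inl hvB)⟩ hadj
  · -- small side is the complement: apply the cut-partition property to (bd \ T') \ I
    rw [min_eq_right hv] at hmin
    set C : Set V := (P \ A₂) \ I with hCdef
    have hCP : C ⊆ P := fun x hx => hx.1.1
    have hCiso : C \ I = (P \ A₂) \ I := by
      rw [hCdef, Set.diff_diff]
      simp
    have hCbd : C ∩ bd = (bd \ T') \ I := by
      ext x
      have h1 : x ∈ A₂ ∩ bd ↔ x ∈ T' \ I := by rw [hA₂bd]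
      have h2 : x ∈ bd → x ∈ P := fun h => hbdP h
      simp only [hCdef, Set.mem_inter_iff, Set.mem_diff] at h1 ⊢
      tauto
    have hCcw : cutWeightIn w P C = α := by
      rw [cw_congr_iso w hsymm P C (P \ A₂) hCP (Set.diff_subset) hCiso,
        cw_compl w hsymm P A₂ hA₂P, hcwA₂]
    have hCcard : C.ncard ≤ ⌈(c : ℝ) / φ⌉₊ := by
      have h1 : volIn (mgraph w) P C = volIn (mgraph w) P (P \ A₂) :=
        volIn_congr_iso w hsymm P C (P \ A₂) hCiso
      refine le_trans ?_ (hnat _ (h1 ▸ hmin))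
      exact ncard_le_volIn w hsymm hirr P C hCP (fun x hx => hx.2)
    have hT3sub : (bd \ T') \ I ⊆ bd := fun x hx => hx.1.1
    obtain ⟨B, hBP, hBbd, hBcw, hBcross⟩ :=
      hQcut P hP ((bd \ T') \ I) hT3sub hT3ne
        ⟨C, hCP, hCbd, hCcard, by rw [hCcw]; exact hαc⟩
    have hsinfle : sInf {n | ∃ A : Set V, A ⊆ P ∧ A ∩ mgBoundary w P = (bd \ T') \ I ∧
        A.ncard ≤ ⌈(c : ℝ) / φ⌉₊ ∧ cutWeightIn w P A ≤ c ∧ cutWeightIn w P A = n} ≤ α :=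
      Nat.sInf_le ⟨C, hCP, hCbd, hCcard, by rw [hCcw]; exact hαc, hCcw⟩
    set A : Set V := (P \ B) \ (I \ T') with hAdef
    have hAP : A ⊆ P := fun x hx => hx.1.1
    have hAbd : A ∩ bd = T' := by
      ext x
      have h1 : x ∈ B ∩ bd ↔ x ∈ (bd \ T') \ I := by rw [← hbddef] at hBbd; rw [hBbd]
      have h2 : x ∈ T' → x ∈ bd := fun h => hT'bd h
      have h3 : x ∈ bd → x ∈ P := fun h => hbdP h
      have h4 : x ∈ B → x ∈ P := fun h => hBP h
      simp only [hAdef, Set.mem_inter_iff, Set.mem_diff] at h1 ⊢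
      tauto
    have hAiso : A \ I = (P \ B) \ I := by
      rw [hAdef]
      ext x
      simp only [Set.mem_diff]
      tauto
    have hAcw : cutWeightIn w P A = α := by
      have h1 : cutWeightIn w P A = cutWeightIn w P B := by
        rw [cw_congr_iso w hsymm P A (P \ B) hAP (Set.diff_subset) hAiso,
          cw_compl w hsymm P B hBP]
      have h2 : cutWeightIn w P A ≤ α := by rw [h1]; exact hBcw.trans hsinfle
      exact le_antisymm h2 (hαle A hAP hAbd)
    refine ⟨A, hAP, hAbd, hAcw, ?_⟩
    intro u v hu hv hadj
    have hvB : v ∈ B := by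
      rcases (Classical.em (v ∈ B)) with h | h
      · exact h
      · exfalso
        have hvI : v ∈ I \ T' := by
          by_contra hvI
          exact hv.2 ⟨⟨hv.1, h⟩, hvI⟩
        exact not_adj_iso w hsymm hvI.1 (hAP hu) hadj.symm
    have huPB : u ∈ P \ B := ⟨hAP hu, hu.1.2⟩
    intro Q hQQ hQuv
    exact hBcross v u hvB huPB hadj.symm Q hQQ ⟨hQuv.2, hQuv.1⟩
end

section
/- Let G = (V, E) be a connected graph and T ⊆ V. Let E' be an IA_G(T, t₁, q₁, d, c₁) set, and let E'' ⊆ E∖E' be an IA_{G∖E'}(T ∪ End(E'), t₂, q₂, d − c₁, c₂) set. If q₂ ≥ t₂ ≥ q₁ ≥ t₁, then E' ∪ E'' is an IA_G(T, t₁, q₂·(d+1), d, c₁ + c₂) set. -/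
open SimpleGraph

section Helpers

variable {V : Type*}

lemma mem_edgesWithin' {A : Set V} {u v : V} : s(u,v) ∈ edgesWithin A ↔ u ∈ A ∧ v ∈ A := by
  constructor
  · intro h; exact ⟨h u (Sym2.mem_mk_left u v), h v (Sym2.mem_mk_right u v)⟩
  · rintro ⟨h1, h2⟩ x hx; rcases Sym2.mem_iff.1 hx with rfl | rfl <;> assumption

lemma mem_interEdges' {G : SimpleGraph V} {Pa : Set (Set V)} {u v : V} :
    s(u,v) ∈ interEdges G Pa ↔ G.Adj u v ∧ ∀ P ∈ Pa, ¬(u ∈ P ∧ v ∈ P) := by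
  constructor
  · rintro ⟨he, u', v', huv, hc⟩
    refine ⟨G.mem_edgeSet.1 he, ?_⟩
    rcases Sym2.eq_iff.1 huv with ⟨rfl, rfl⟩ | ⟨rfl, rfl⟩
    · exact hc
    · intro P hP h; exact hc P hP ⟨h.2, h.1⟩
  · rintro ⟨h, hc⟩; exact ⟨G.mem_edgeSet.2 h, u, v, rfl, hc⟩

lemma part_eq' {Pa : Set (Set V)} (hPa : IsVertexPartition Pa) {P Q : Set V} {x : V}
    (hP : P ∈ Pa) (hQ : Q ∈ Pa) (hxP : x ∈ P) (hxQ : x ∈ Q) : P = Q := by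
  obtain ⟨R, _, hu⟩ := hPa.2 x
  rw [hu P ⟨hP, hxP⟩, hu Q ⟨hQ, hxQ⟩]

lemma crossing_edge' {W : Type*} {H : SimpleGraph W} {S : Set W} {a b : W}
    (w : H.Walk a b) (ha : a ∈ S) (hb : b ∉ S) :
    ∃ x y, H.Adj x y ∧ x ∈ S ∧ y ∉ S := by
  classical
  induction w with
  | nil => exact absurd ha hb
  | @cons u v b h p ih =>
    by_cases hv : v ∈ S
    · exact ih hv hb
    · exact ⟨u, v, h, ha, hv⟩

lemma ncard_biUnion_le_mul' [Fintype V] (q : ℕ) (S : Set (Set V)) (f : Set V → Set V)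
    (hf : ∀ Q ∈ S, (f Q).ncard ≤ q) : (⋃ Q ∈ S, f Q).ncard ≤ q * S.ncard := by
  classical
  refine Set.Finite.induction_on
    (motive := fun S _ => (∀ Q ∈ S, (f Q).ncard ≤ q) → (⋃ Q ∈ S, f Q).ncard ≤ q * S.ncard)
    S (Set.toFinite S) (by simp) ?_ hf
  intro a s ha hfin ih hf'
  rw [Set.biUnion_insert]
  calc (f a ∪ ⋃ Q ∈ s, f Q).ncard ≤ (f a).ncard + (⋃ Q ∈ s, f Q).ncard :=
        Set.ncard_union_le _ _
    _ ≤ q + q * s.ncard :=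
        Nat.add_le_add (hf' a (Set.mem_insert a s))
          (ih (fun Q hQ => hf' Q (Set.mem_insert_of_mem a hQ)))
    _ = q * (insert a s).ncard := by
        rw [Set.ncard_insert_of_notMem ha hfin]; ring

lemma ncard_biUnion_le_biUnion' [Fintype V] (S : Set (Set V)) (g h : Set V → Set (Sym2 V))
    (hle : ∀ Q ∈ S, (g Q).ncard ≤ (h Q).ncard)
    (hdisj : ∀ Q ∈ S, ∀ R ∈ S, Q ≠ R → Disjoint (h Q) (h R)) :
    (⋃ Q ∈ S, g Q).ncard ≤ (⋃ Q ∈ S, h Q).ncard := by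
  classical
  refine Set.Finite.induction_on
    (motive := fun S _ => (∀ Q ∈ S, (g Q).ncard ≤ (h Q).ncard) →
      (∀ Q ∈ S, ∀ R ∈ S, Q ≠ R → Disjoint (h Q) (h R)) →
      (⋃ Q ∈ S, g Q).ncard ≤ (⋃ Q ∈ S, h Q).ncard)
    S (Set.toFinite S) (by simp) ?_ hle hdisj
  intro a s ha hfin ih hle' hdisj'
  rw [Set.biUnion_insert, Set.biUnion_insert]
  have hd : Disjoint (h a) (⋃ Q ∈ s, h Q) := by
    rw [Set.disjoint_iUnion_right]
    intro Q
    rw [Set.disjoint_iUnion_right]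
    intro hQ
    exact hdisj' a (Set.mem_insert a s) Q (Set.mem_insert_of_mem a hQ)
      (fun hEq => ha (hEq ▸ hQ))
  calc (g a ∪ ⋃ Q ∈ s, g Q).ncard ≤ (g a).ncard + (⋃ Q ∈ s, g Q).ncard :=
        Set.ncard_union_le _ _
    _ ≤ (h a).ncard + (⋃ Q ∈ s, h Q).ncard :=
        Nat.add_le_add (hle' a (Set.mem_insert a s))
          (ih (fun Q hQ => hle' Q (Set.mem_insert_of_mem a hQ))
            (fun Q hQ R hR hne => hdisj' Q (Set.mem_insert_of_mem a hQ)
              R (Set.mem_insert_of_mem a hR) hne))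
    _ = (h a ∪ ⋃ Q ∈ s, h Q).ncard :=
        (Set.ncard_union_eq hd (Set.toFinite _) (Set.toFinite _)).symm

end Helpers

/-- Composition of IA sets: if `E'` is an `IA_G(T, t₁, q₁, d, c₁)` set and `E''` is an
`IA_{G∖E'}(T ∪ End(E'), t₂, q₂, d − c₁, c₂)` set with `q₂ ≥ t₂ ≥ q₁ ≥ t₁`, then `E' ∪ E''`
is an `IA_G(T, t₁, q₂·(d+1), d, c₁ + c₂)` set. -/
theorem statement_13 {V : Type*} [Fintype V] [DecidableEq V]
    (G : SimpleGraph V) (hG : G.Connected) (T : Set V)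
    (t₁ q₁ t₂ q₂ d c₁ c₂ : ℕ)
    (hc₁ : 0 < c₁) (hc₂ : 0 < c₂) (hd : c₁ + c₂ ≤ d)
    (ht₁ : 0 < t₁) (h₁ : t₁ ≤ q₁) (h₂ : q₁ ≤ t₂) (h₃ : t₂ ≤ q₂)
    (E' E'' : Set (Sym2 V))
    (hE' : IsIASet G T t₁ q₁ d c₁ E')
    (hE''sub : E'' ⊆ G.edgeSet \ E')
    (hE'' : IsIASet (G.deleteEdges E') (T ∪ endpts E') t₂ q₂ (d - c₁) c₂ E'') :
    IsIASet G T t₁ (q₂ * (d + 1)) d (c₁ + c₂) (E' ∪ E'') := by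
  classical
  obtain ⟨P1, hP1part, hP1conn, hE'eq, hE'cut⟩ := hE'
  obtain ⟨P2, hP2part, hP2conn, hE''eq, hE''cut⟩ := hE''
  haveI : Nonempty V := hG.nonempty
  -- Edges not in E' lie within a part of P1
  have hF1 : ∀ {u v : V}, G.Adj u v → s(u,v) ∉ E' → ∃ P ∈ P1, u ∈ P ∧ v ∈ P := by
    intro u v hadj hne
    by_contra hc
    push_neg at hc
    exact hne (hE'eq ▸ mem_interEdges'.2 ⟨hadj, fun P hP h => hc P hP h.1 h.2⟩)
  -- Edges within a part of P1 are not in E'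
  have hwithin : ∀ {u v : V} {P : Set V}, P ∈ P1 → u ∈ P → v ∈ P → s(u,v) ∉ E' := by
    intro u v P hP hu hv he
    exact (mem_interEdges'.1 (hE'eq ▸ he : s(u,v) ∈ interEdges G P1)).2 P hP ⟨hu, hv⟩
  -- Walks in G \ E' stay within parts of P1
  have hstay : ∀ (x w : V), (G.deleteEdges E').Walk x w → ∀ P ∈ P1, x ∈ P → w ∈ P := by
    intro x w wk
    induction wk with
    | nil => intro P hP hx; exact hx
    | @cons a b c h p ih =>
      intro P hP ha
      rw [deleteEdges_adj] at h
      obtain ⟨Q, hQ, haQ, hbQ⟩ := hF1 h.1 h.2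
      exact ih P hP ((part_eq' hP1part hQ hP haQ ha) ▸ hbQ)
  -- Parts of P1 are component sets of G \ E'
  have hcomp : ∀ P ∈ P1, IsComponentSet (G.deleteEdges E') P := by
    intro P hP
    obtain ⟨v0, hv0⟩ := hP1part.1 P hP
    refine ⟨v0, ?_⟩
    ext u
    simp only [Set.mem_setOf_eq]
    constructor
    · intro hu
      exact ((hP1conn P hP).preconnected ⟨u, hu⟩ ⟨v0, hv0⟩).map
        ⟨Subtype.val, fun {a b} hadj => by
          have hadj' : G.Adj a b := by simpa using hadj
          rw [deleteEdges_adj]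
          exact ⟨hadj', hwithin hP a.2 b.2⟩⟩
    · intro hr
      obtain ⟨wk⟩ := hr.symm
      exact hstay v0 u wk P hP hv0
  -- Parts of P2 refine parts of P1
  have hrefine : ∀ P'' ∈ P2, ∃ Q ∈ P1, P'' ⊆ Q := by
    intro P'' hP''
    obtain ⟨x0, hx0⟩ := hP2part.1 P'' hP''
    obtain ⟨Q, ⟨hQ, hx0Q⟩, _⟩ := hP1part.2 x0
    refine ⟨Q, hQ, fun y hy => ?_⟩
    have hr : (G.deleteEdges E').Reachable x0 y :=
      ((hP2conn P'' hP'').preconnected ⟨x0, hx0⟩ ⟨y, hy⟩).map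
        ⟨Subtype.val, fun {a b} hadj => by simpa using hadj⟩
    obtain ⟨wk⟩ := hr
    exact hstay x0 y wk Q hQ hx0Q
  -- The union is the set of intercluster edges of P2 in G
  have hunion : E' ∪ E'' = interEdges G P2 := by
    ext e
    induction e with
    | _ u v =>
      constructor
      · rintro (he | he)
        · have h := mem_interEdges'.1 (hE'eq ▸ he : s(u,v) ∈ interEdges G P1)
          refine mem_interEdges'.2 ⟨h.1, ?_⟩
          rintro P'' hP'' ⟨hu, hv⟩
          obtain ⟨Q, hQ, hsub⟩ := hrefine P'' hP''
          exact h.2 Q hQ ⟨hsub hu, hsub hv⟩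
        · have h := mem_interEdges'.1 (hE''eq ▸ he : s(u,v) ∈ interEdges (G.deleteEdges E') P2)
          have hadj : G.Adj u v := (deleteEdges_adj.1 ((G.deleteEdges E').mem_edgeSet.1 h.1)).1
          exact mem_interEdges'.2 ⟨hadj, h.2⟩
      · intro he
        have h := mem_interEdges'.1 he
        by_cases hE : s(u,v) ∈ E'
        · exact Or.inl hE
        · refine Or.inr ?_
          rw [hE''eq]
          exact mem_interEdges'.2 ⟨by rw [deleteEdges_adj]; exact ⟨h.1, hE⟩, h.2⟩
  refine ⟨P2, hP2part, ?_, hunion, ?_⟩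
  · intro P hP
    refine (hP2conn P hP).mono ?_
    intro a b hadj
    have hadj' : (G.deleteEdges E').Adj a b := by simpa using hadj
    have : G.Adj a b := (deleteEdges_adj.1 hadj').1
    simpa using this
  -- Main cut property
  intro W hW T' hT'sub hT'ne α hαd hA
  obtain ⟨A, hAW, hAcard, hAT, hAcut⟩ := hA
  obtain ⟨w0, rfl⟩ := hW
  have hWuniv : {u | G.Reachable u w0} = Set.univ :=
    Set.eq_univ_of_forall fun u => hG.preconnected u w0
  rw [hWuniv] at hT'sub ⊢
  rw [Set.inter_univ] at hT'sub
  obtain ⟨B₁, -, hB₁card, hB₁T, hB₁cut, hB₁part⟩ :=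
    hE'cut Set.univ ⟨w0, hWuniv.symm⟩ T' (by rw [Set.inter_univ]; exact hT'sub) hT'ne α hαd
      ⟨A, Set.subset_univ A, hAcard, hAT, hAcut⟩
  -- the full and partial parts
  set Sfull : Set (Set V) := {Q | Q ∈ P1 ∧ Q ⊆ B₁} with hSfulldef
  set Spart : Set (Set V) :=
    {Q | Q ∈ P1 ∧ (B₁ ∩ Q).Nonempty ∧ ¬Q ⊆ B₁ ∧ (B₁ ∩ Q ∩ (T ∪ endpts E')).Nonempty}
    with hSpartdef
  have hSpartP1 : ∀ Q ∈ Spart, Q ∈ P1 := fun Q hQ => hQ.1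
  -- the key identity relating cuts in G \ E' restricted to a part
  have hQeq : ∀ Q ∈ P1, ecut (G.deleteEdges E') (B₁ ∩ Q) = ecut G B₁ ∩ edgesWithin Q := by
    intro Q hQ
    ext e
    constructor
    · rintro ⟨he, u, v, rfl, hu, hv⟩
      rw [edgeSet_deleteEdges] at he
      have hadj : G.Adj u v := G.mem_edgeSet.1 he.1
      obtain ⟨R, hR, huR, hvR⟩ := hF1 hadj he.2
      have hRQ : R = Q := part_eq' hP1part hR hQ huR hu.2
      refine ⟨⟨he.1, u, v, rfl, hu.1, fun hvB => hv ⟨hvB, hRQ ▸ hvR⟩⟩,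
        mem_edgesWithin'.2 ⟨hu.2, hRQ ▸ hvR⟩⟩
    · rintro ⟨⟨he, u, v, rfl, hu, hv⟩, hw⟩
      have huQ := (mem_edgesWithin'.1 hw).1
      have hvQ := (mem_edgesWithin'.1 hw).2
      refine ⟨?_, u, v, rfl, ⟨hu, huQ⟩, fun h => hv h.1⟩
      rw [edgeSet_deleteEdges]
      exact ⟨he, hwithin hQ huQ hvQ⟩
  have hαQ : ∀ Q ∈ P1, (ecut (G.deleteEdges E') (B₁ ∩ Q)).ncard ≤ α - c₁ := by
    intro Q hQ
    rw [hQeq Q hQ]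
    exact hB₁part Q hQ
  -- apply the second IA property on each partial part
  have hchoice : ∀ Q ∈ Spart, ∃ BQ : Set V, BQ ⊆ Q ∧ BQ.ncard ≤ q₂ ∧
      BQ ∩ (T ∪ endpts E') = B₁ ∩ Q ∩ (T ∪ endpts E') ∧
      (ecut (G.deleteEdges E') BQ).ncard ≤ (ecut (G.deleteEdges E') (B₁ ∩ Q)).ncard ∧
      ∀ P ∈ P2, (ecut (G.deleteEdges E') BQ ∩ edgesWithin P).ncard ≤
        (ecut (G.deleteEdges E') (B₁ ∩ Q)).ncard - c₂ := by
    intro Q hQ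
    refine hE''cut Q (hcomp Q hQ.1) (B₁ ∩ Q ∩ (T ∪ endpts E'))
      (fun x hx => ⟨hx.2, hx.1.2⟩) hQ.2.2.2 _ ?_
      ⟨B₁ ∩ Q, Set.inter_subset_right, ?_, rfl, rfl⟩
    · have := hαQ Q hQ.1
      omega
    · exact le_trans (Set.ncard_le_ncard Set.inter_subset_left (Set.toFinite _))
        (le_trans hB₁card h₂)
  choose! f hf1 hf2 hf3 hf4 hf5 using hchoice
  -- the new cut side
  set B : Set V := (⋃ Q ∈ Sfull, Q) ∪ ⋃ Q ∈ Spart, f Q with hBdef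
  -- membership transfer for vertices in T ∪ endpts E'
  have hmemB : ∀ x, x ∈ T ∪ endpts E' → (x ∈ B ↔ x ∈ B₁) := by
    intro x hx
    constructor
    · intro hxB
      rcases hxB with h | h
      · obtain ⟨Q, hQ, hxQ⟩ := Set.mem_iUnion₂.1 h
        exact hQ.2 hxQ
      · obtain ⟨Q, hQ, hxQ⟩ := Set.mem_iUnion₂.1 h
        have : x ∈ f Q ∩ (T ∪ endpts E') := ⟨hxQ, hx⟩
        rw [hf3 Q hQ] at this
        exact this.1.1
    · intro hxB₁
      obtain ⟨Q, ⟨hQ, hxQ⟩, -⟩ := hP1part.2 x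
      by_cases hfull : Q ⊆ B₁
      · exact Or.inl (Set.mem_iUnion₂.2 ⟨Q, ⟨hQ, hfull⟩, hxQ⟩)
      · have hQp : Q ∈ Spart := ⟨hQ, ⟨x, hxB₁, hxQ⟩, hfull, ⟨x, ⟨hxB₁, hxQ⟩, hx⟩⟩
        have : x ∈ f Q ∩ (T ∪ endpts E') := by
          rw [hf3 Q hQp]; exact ⟨⟨hxB₁, hxQ⟩, hx⟩
        exact Or.inr (Set.mem_iUnion₂.2 ⟨Q, hQp, this.1⟩)
  -- the key containment for the cut of B
  have hcutB : ecut G B ⊆ (ecut G B₁ ∩ E') ∪ ⋃ Q ∈ Spart, ecut (G.deleteEdges E') (f Q) := by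
    rintro e ⟨he, u, v, rfl, huB, hvB⟩
    have hadj : G.Adj u v := G.mem_edgeSet.1 he
    by_cases hE : s(u,v) ∈ E'
    · left
      have huEnd : u ∈ endpts E' := ⟨s(u,v), hE, Sym2.mem_mk_left u v⟩
      have hvEnd : v ∈ endpts E' := ⟨s(u,v), hE, Sym2.mem_mk_right u v⟩
      have huB₁ : u ∈ B₁ := (hmemB u (Or.inr huEnd)).1 huB
      have hvB₁ : v ∉ B₁ := fun h => hvB ((hmemB v (Or.inr hvEnd)).2 h)
      exact ⟨⟨he, u, v, rfl, huB₁, hvB₁⟩, hE⟩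
    · right
      obtain ⟨Q, hQ, huQ, hvQ⟩ := hF1 hadj hE
      rcases huB with h | h
      · obtain ⟨Q', hQ', huQ'⟩ := Set.mem_iUnion₂.1 h
        have hQQ : Q' = Q := part_eq' hP1part hQ'.1 hQ huQ' huQ
        exact absurd (Or.inl (Set.mem_iUnion₂.2 ⟨Q', hQ', hQQ ▸ hvQ⟩) : v ∈ B) hvB
      · obtain ⟨Q', hQ', huQ'⟩ := Set.mem_iUnion₂.1 h
        have hQQ : Q' = Q := part_eq' hP1part hQ'.1 hQ (hf1 Q' hQ' huQ') huQ
        subst hQQ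
        refine Set.mem_iUnion₂.2 ⟨Q', hQ', ?_, u, v, rfl, huQ',
          fun hv' => hvB (Or.inr (Set.mem_iUnion₂.2 ⟨Q', hQ', hv'⟩))⟩
        rw [edgeSet_deleteEdges]
        exact ⟨he, hE⟩
  refine ⟨B, Set.subset_univ B, ?_, ?_, ?_, ?_⟩
  · -- cardinality bound
    have hU1 : (⋃ Q ∈ Sfull, Q) ⊆ B₁ := Set.iUnion₂_subset fun Q hQ => hQ.2
    have hU1card : (⋃ Q ∈ Sfull, Q).ncard ≤ q₂ :=
      le_trans (Set.ncard_le_ncard hU1 (Set.toFinite _))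
        (le_trans hB₁card (le_trans h₂ h₃))
    -- number of partial parts is at most d
    have hpick : ∀ Q ∈ Spart, ∃ e, e ∈ (ecut G B₁ \ E') ∩ edgesWithin Q := by
      intro Q hQ
      obtain ⟨a, haB, haQ⟩ := hQ.2.1
      obtain ⟨b, hbQ, hbB⟩ : ∃ b ∈ Q, b ∉ B₁ := by
        by_contra hc
        push_neg at hc
        exact hQ.2.2.1 hc
      obtain ⟨wk⟩ := (hP1conn Q hQ.1).preconnected ⟨a, haQ⟩ ⟨b, hbQ⟩
      obtain ⟨x, y, hadj, hxS, hyS⟩ :=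
        crossing_edge' (S := {z : Q | (z : V) ∈ B₁}) wk haB hbB
      have hadj' : G.Adj (x : V) (y : V) := by simpa using hadj
      exact ⟨s((x : V), (y : V)),
        ⟨⟨G.mem_edgeSet.2 hadj', _, _, rfl, hxS, hyS⟩, hwithin hQ.1 x.2 y.2⟩,
        mem_edgesWithin'.2 ⟨x.2, y.2⟩⟩
    haveI hne2 : Nonempty (Sym2 V) :=
      Nonempty.intro (s(Classical.arbitrary V, Classical.arbitrary V))
    choose! g hg using hpick
    have hSpartcard : Spart.ncard ≤ (ecut G B₁ \ E').ncard := by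
      refine Set.ncard_le_ncard_of_injOn g (fun Q hQ => (hg Q hQ).1) ?_ (Set.toFinite _)
      intro Q hQ R hR hgQR
      obtain ⟨-, u, v, huv, -, -⟩ := (hg Q hQ).1.1
      have huQ : u ∈ Q := (hg Q hQ).2 u (huv ▸ Sym2.mem_mk_left u v)
      have huR : u ∈ R := (hg R hR).2 u ((hgQR ▸ huv) ▸ Sym2.mem_mk_left u v)
      exact part_eq' hP1part (hSpartP1 Q hQ) (hSpartP1 R hR) huQ huR
    have hSpartd : Spart.ncard ≤ d :=
      le_trans hSpartcard (le_trans (Set.ncard_le_ncard Set.diff_subset (Set.toFinite _))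
        (le_trans hB₁cut hαd))
    have hU2card : (⋃ Q ∈ Spart, f Q).ncard ≤ q₂ * Spart.ncard :=
      ncard_biUnion_le_mul' q₂ Spart f hf2
    calc B.ncard ≤ (⋃ Q ∈ Sfull, Q).ncard + (⋃ Q ∈ Spart, f Q).ncard :=
          Set.ncard_union_le _ _
      _ ≤ q₂ + q₂ * d := Nat.add_le_add hU1card
          (le_trans hU2card (Nat.mul_le_mul_left q₂ hSpartd))
      _ = q₂ * (d + 1) := by ring
  · -- B ∩ T = T'
    ext x
    constructor
    · rintro ⟨hxB, hxT⟩
      have hxB₁ : x ∈ B₁ := (hmemB x (Or.inl hxT)).1 hxB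
      exact hB₁T ▸ (⟨hxB₁, hxT⟩ : x ∈ B₁ ∩ T)
    · intro hxT'
      have hx : x ∈ B₁ ∩ T := hB₁T.symm ▸ hxT'
      exact ⟨(hmemB x (Or.inl hx.2)).2 hx.1, hx.2⟩
  · -- cut size bound
    have h1 : (ecut G B).ncard ≤
        ((ecut G B₁ ∩ E') ∪ ⋃ Q ∈ Spart, ecut (G.deleteEdges E') (f Q)).ncard :=
      Set.ncard_le_ncard hcutB (Set.toFinite _)
    have h2' : (⋃ Q ∈ Spart, ecut (G.deleteEdges E') (f Q)).ncard ≤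
        (⋃ Q ∈ Spart, (ecut G B₁ ∩ edgesWithin Q)).ncard := by
      refine ncard_biUnion_le_biUnion' Spart _ _ ?_ ?_
      · intro Q hQ
        rw [← hQeq Q (hSpartP1 Q hQ)]
        exact hf4 Q hQ
      · intro Q hQ R hR hne
        rw [Set.disjoint_left]
        rintro e ⟨⟨-, u, v, huv, -, -⟩, heQ⟩ ⟨-, heR⟩
        have huQ : u ∈ Q := heQ u (huv ▸ Sym2.mem_mk_left u v)
        have huR : u ∈ R := heR u (huv ▸ Sym2.mem_mk_left u v)
        exact hne (part_eq' hP1part (hSpartP1 Q hQ) (hSpartP1 R hR) huQ huR)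
    have h3' : (⋃ Q ∈ Spart, (ecut G B₁ ∩ edgesWithin Q)) ⊆ ecut G B₁ \ E' := by
      rintro e he
      obtain ⟨Q, hQ, h1e, h2e⟩ := Set.mem_iUnion₂.1 he
      obtain ⟨-, u, v, huv, -, -⟩ := id h1e
      refine ⟨h1e, ?_⟩
      have huQ : u ∈ Q := h2e u (huv ▸ Sym2.mem_mk_left u v)
      have hvQ : v ∈ Q := h2e v (huv ▸ Sym2.mem_mk_right u v)
      rw [huv]
      exact hwithin (hSpartP1 Q hQ) huQ hvQ
    calc (ecut G B).ncard
        ≤ (ecut G B₁ ∩ E').ncard + (⋃ Q ∈ Spart, ecut (G.deleteEdges E') (f Q)).ncard :=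
          le_trans h1 (Set.ncard_union_le _ _)
      _ ≤ (ecut G B₁ ∩ E').ncard + (ecut G B₁ \ E').ncard :=
          Nat.add_le_add_left (le_trans h2'
            (Set.ncard_le_ncard h3' (Set.toFinite _))) _
      _ = (ecut G B₁).ncard :=
          Set.ncard_inter_add_ncard_diff_eq_ncard _ _ (Set.toFinite _)
      _ ≤ α := hB₁cut
  · -- per-part bound
    intro P'' hP''
    obtain ⟨Q, hQ, hsub⟩ := hrefine P'' hP''
    have hcase : ∀ e ∈ ecut G B ∩ edgesWithin P'',
        Q ∈ Spart ∧ e ∈ ecut (G.deleteEdges E') (f Q) := by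
      rintro e ⟨heB, hew⟩
      rcases hcutB heB with ⟨h1e, hE⟩ | h2e
      · obtain ⟨-, u, v, huv, -, -⟩ := h1e
        have huP : u ∈ P'' := hew u (huv ▸ Sym2.mem_mk_left u v)
        have hvP : v ∈ P'' := hew v (huv ▸ Sym2.mem_mk_right u v)
        exact absurd (huv ▸ hE) (hwithin hQ (hsub huP) (hsub hvP))
      · obtain ⟨R, hR, heR⟩ := Set.mem_iUnion₂.1 h2e
        obtain ⟨-, u, v, huv, huf, -⟩ := id heR
        have huR : u ∈ R := hf1 R hR huf
        have huQ : u ∈ Q := hsub (hew u (huv ▸ Sym2.mem_mk_left u v))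
        have hRQ : R = Q := part_eq' hP1part (hSpartP1 R hR) hQ huR huQ
        exact ⟨hRQ ▸ hR, hRQ ▸ heR⟩
    by_cases hQp : Q ∈ Spart
    · have hsub' : ecut G B ∩ edgesWithin P'' ⊆
          ecut (G.deleteEdges E') (f Q) ∩ edgesWithin P'' :=
        fun e he => ⟨(hcase e he).2, he.2⟩
      have hb := hf5 Q hQp P'' hP''
      have ha := hαQ Q hQ
      have := le_trans (Set.ncard_le_ncard hsub' (Set.toFinite _)) hb
      omega
    · have : ecut G B ∩ edgesWithin P'' = ∅ := by
        ext e
        simp only [Set.mem_empty_iff_false, iff_false]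
        intro he
        exact hQp (hcase e he).1
      rw [this]
      simp
end

section
/- Let G = (V, E) be a connected graph and T ⊆ V. Let E' ⊆ E satisfy: (1) E' is the set of intercluster edges of a vertex partition of G; (2) for every ∅ ⊊ T' ⊆ T such that the minimum (T', T∖T', t, d)-cut has size α ≤ d and some minimum (T', T∖T', t, d)-cut is a simple cut, there exists a (T', T∖T', q, α)-cut (V', V∖V') such that every connected component of G∖E' contains at most α − 1 edges of ∂_G(V'). Then E' is an IA_G(T, t, q + t, d, 1) set. -/
open SimpleGraph

section helpers
variable {V : Type*}

lemma ecut_union_subset (G : SimpleGraph V) (X Y : Set V) :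
    ecut G (X ∪ Y) ⊆ ecut G X ∪ ecut G Y := by
  rintro e ⟨he, u, v, rfl, hu, hv⟩
  rcases hu with hu | hu
  · exact Or.inl ⟨he, u, v, rfl, hu, fun h => hv (Or.inl h)⟩
  · exact Or.inr ⟨he, u, v, rfl, hu, fun h => hv (Or.inr h)⟩

lemma ecut_empty (G : SimpleGraph V) : ecut G (∅ : Set V) = ∅ := by
  ext e; simp only [ecut, Set.mem_setOf_eq, Set.mem_empty_iff_false, iff_false]
  rintro ⟨-, u, v, -, hu, -⟩; exact hu

def compIn (G : SimpleGraph V) (A : Set V) (x₀ : V) : Set V :=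
  {y | ∃ (h : y ∈ A) (h₀ : x₀ ∈ A), (G.induce A).Reachable ⟨y, h⟩ ⟨x₀, h₀⟩}

lemma compIn_subset (G : SimpleGraph V) (A : Set V) (x₀ : V) : compIn G A x₀ ⊆ A :=
  fun _ h => h.1

lemma mem_compIn_self {G : SimpleGraph V} {A : Set V} {x₀ : V} (h : x₀ ∈ A) :
    x₀ ∈ compIn G A x₀ := ⟨h, h, Reachable.refl _⟩

lemma mem_compIn_of_adj {G : SimpleGraph V} {A : Set V} {x₀ u w : V}
    (hu : u ∈ A) (hw : w ∈ compIn G A x₀) (h : G.Adj u w) : u ∈ compIn G A x₀ := by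
  obtain ⟨hwA, h₀, hr⟩ := hw
  have hadj : (G.induce A).Adj ⟨u, hu⟩ ⟨w, hwA⟩ := by simpa using h
  exact ⟨hu, h₀, hadj.reachable.trans hr⟩

lemma compIn_reach_aux {G : SimpleGraph V} {A : Set V} {x₀ : V} :
    ∀ {u v : ↥A} (_ : (G.induce A).Walk u v) (hv : ↑v ∈ compIn G A x₀),
      ∃ hu : ↑u ∈ compIn G A x₀,
        (G.induce (compIn G A x₀)).Reachable ⟨↑u, hu⟩ ⟨↑v, hv⟩ := by
  intro u v p
  induction p with
  | nil => exact fun hv => ⟨hv, Reachable.refl _⟩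
  | @cons a b c h p ih =>
    intro hv
    obtain ⟨hb, hr⟩ := ih hv
    have hadj : G.Adj ↑a ↑b := by simpa using h
    have ha : ↑a ∈ compIn G A x₀ := mem_compIn_of_adj a.2 hb hadj
    have hadj' : (G.induce (compIn G A x₀)).Adj ⟨↑a, ha⟩ ⟨↑b, hb⟩ := by simpa using hadj
    exact ⟨ha, hadj'.reachable.trans hr⟩

lemma compIn_connected {G : SimpleGraph V} {A : Set V} {x₀ : V} (h₀ : x₀ ∈ A) :
    (G.induce (compIn G A x₀)).Connected := by
  have hx : x₀ ∈ compIn G A x₀ := mem_compIn_self h₀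
  rw [connected_iff]
  refine ⟨fun y z => ?_, ⟨⟨x₀, hx⟩⟩⟩
  suffices h : ∀ w : ↥(compIn G A x₀),
      (G.induce (compIn G A x₀)).Reachable w ⟨x₀, hx⟩ from (h y).trans (h z).symm
  rintro ⟨w, hw⟩
  obtain ⟨hwA, h₀', hr⟩ := hw
  obtain ⟨p⟩ := hr
  obtain ⟨hu, r⟩ := compIn_reach_aux p hx
  exact r

lemma compIn_eq_of_mem {G : SimpleGraph V} {A : Set V} {x y : V}
    (h : x ∈ compIn G A y) : compIn G A x = compIn G A y := by
  obtain ⟨hx, hy, hr⟩ := h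
  ext z
  constructor
  · rintro ⟨hz, hx', hzr⟩; exact ⟨hz, hy, hzr.trans hr⟩
  · rintro ⟨hz, hy', hzr⟩; exact ⟨hz, hx, hzr.trans hr.symm⟩

lemma ecut_split {G : SimpleGraph V} {A A₁ : Set V} (h₁ : A₁ ⊆ A)
    (hcl : ∀ ⦃u w⦄, u ∈ A → w ∈ A₁ → G.Adj u w → u ∈ A₁) :
    ecut G A = ecut G A₁ ∪ ecut G (A \ A₁) ∧ Disjoint (ecut G A₁) (ecut G (A \ A₁)) := by
  constructor
  · ext e
    constructor
    · rintro ⟨he, u, v, rfl, hu, hv⟩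
      by_cases hu1 : u ∈ A₁
      · exact Or.inl ⟨he, u, v, rfl, hu1, fun h => hv (h₁ h)⟩
      · exact Or.inr ⟨he, u, v, rfl, ⟨hu, hu1⟩, fun h => hv h.1⟩
    · rintro (⟨he, u, v, rfl, hu, hv⟩ | ⟨he, u, v, rfl, hu, hv⟩)
      · refine ⟨he, u, v, rfl, h₁ hu, fun hvA => ?_⟩
        have hadj : G.Adj u v := he
        exact hv (hcl hvA hu hadj.symm)
      · refine ⟨he, u, v, rfl, hu.1, fun hvA => ?_⟩
        have hadj : G.Adj u v := he
        have hv1 : v ∈ A₁ := by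
          by_contra hv1; exact hv ⟨hvA, hv1⟩
        exact hu.2 (hcl hu.1 hv1 hadj)
  · rw [Set.disjoint_left]
    rintro e ⟨he, u, v, rfl, hu, hv⟩ ⟨he', u', v', huv, hu', hv'⟩
    rcases Sym2.eq_iff.mp huv with ⟨rfl, rfl⟩ | ⟨rfl, rfl⟩
    · exact hu'.2 hu
    · have hadj : G.Adj u v := he
      exact hu'.2 (hcl hu'.1 hu hadj.symm)
  
lemma walk_stays {G : SimpleGraph V} {C : Set V} (h : ecut G C = ∅) :
    ∀ {u v : V}, G.Walk u v → u ∈ C → v ∈ C := by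
  intro u v p
  induction p with
  | nil => exact id
  | @cons a b c hadj p ih =>
    intro ha
    refine ih (by_contra fun hb => ?_)
    have : s(a, b) ∈ ecut G C := ⟨hadj, a, b, rfl, ha, hb⟩
    simp [h] at this

lemma reach_delete_of_induce {G : SimpleGraph V} {E' : Set (Sym2 V)} {P : Set V}
    (hP : ∀ a b : V, a ∈ P → b ∈ P → G.Adj a b → s(a, b) ∉ E')
    {x y : ↥P} (h : (G.induce P).Reachable x y) :
    (G.deleteEdges E').Reachable ↑x ↑y := by
  refine Reachable.map (⟨fun a => (↑a : V), fun {a b} hab => ?_⟩ : G.induce P →g G.deleteEdges E') h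
  have h2 : G.Adj ↑a ↑b := by simpa using hab
  exact deleteEdges_adj.mpr ⟨h2, hP a b a.2 b.2 h2⟩

end helpers

/-- Let `G` be connected, `T ⊆ V`, and `E'` the set of intercluster edges of a vertex
partition of `G` such that for every nonempty `T' ⊆ T` whose minimum `(T', T∖T', t, d)`-cut
has size `α ≤ d` and such that some minimum `(T', T∖T', t, d)`-cut is a simple cut, there is
a `(T', T∖T', q, α)`-cut such that every connected component of `G ∖ E'` contains at most
`α − 1` edges of its cut-set. Then `E'` is an `IA_G(T, t, q + t, d, 1)` set. -/
theorem statement_14 {V : Type*} [Fintype V] [DecidableEq V]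
    (G : SimpleGraph V) (hG : G.Connected) (T : Set V)
    (t q d : ℕ) (ht : 0 < t) (htq : t ≤ q) (hd : 0 < d)
    (E' : Set (Sym2 V))
    (hpart : ∃ Pa : Set (Set V), IsVertexPartition Pa ∧ E' = interEdges G Pa)
    (hcond : ∀ T' : Set V, T' ⊆ T → T'.Nonempty → ∀ α : ℕ, α ≤ d →
      ((∃ A : Set V, A.ncard ≤ t ∧ A ∩ T = T' ∧ (ecut G A).ncard = α) ∧
       (∀ A : Set V, A.ncard ≤ t → A ∩ T = T' → (ecut G A).ncard ≤ d →
          α ≤ (ecut G A).ncard)) →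
      (∃ A : Set V, A.ncard ≤ t ∧ A ∩ T = T' ∧ (ecut G A).ncard = α ∧
        (G.induce A).Connected) →
      ∃ B : Set V, B.ncard ≤ q ∧ B ∩ T = T' ∧ (ecut G B).ncard ≤ α ∧
        ∀ C : Set V, IsComponentSet (G.deleteEdges E') C →
          (ecut G B ∩ edgesWithin C).ncard ≤ α - 1) :
    IsIASet G T t (q + t) d 1 E' := by
  classical
  obtain ⟨Pa, ⟨hPne, hPuniq⟩, hE⟩ := hpart
  have hpart_mem : ∀ x : V, (hPuniq x).choose ∈ Pa ∧ x ∈ (hPuniq x).choose :=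
    fun x => (hPuniq x).choose_spec.1
  have hpart_uniq : ∀ (x : V) (P : Set V), P ∈ Pa → x ∈ P → P = (hPuniq x).choose :=
    fun x P h1 h2 => (hPuniq x).choose_spec.2 P ⟨h1, h2⟩
  set pt : V → Set V := fun x => (hPuniq x).choose with hpt
  set comp : V → Set V := fun x => compIn G (pt x) x with hcomp
  have hxcomp : ∀ x, x ∈ comp x := fun x => mem_compIn_self (hpart_mem x).2
  have hcomp_sub : ∀ x, comp x ⊆ pt x := fun x => compIn_subset _ _ _
  have hinpart : ∀ (P : Set V), P ∈ Pa → ∀ a b : V, a ∈ P → b ∈ P → s(a, b) ∉ E' := by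
    intro P hPa a b ha hb hmem
    rw [hE] at hmem
    obtain ⟨-, u, v, huv, hall⟩ := hmem
    rcases Sym2.eq_iff.mp huv with ⟨rfl, rfl⟩ | ⟨rfl, rfl⟩
    · exact hall P hPa ⟨ha, hb⟩
    · exact hall P hPa ⟨hb, ha⟩
  have hcomp_eq : ∀ x y : V, x ∈ comp y → comp x = comp y := by
    intro x y hx
    have hxp : x ∈ pt y := hcomp_sub y hx
    have hpteq : pt y = pt x := hpart_uniq x (pt y) (hpart_mem y).1 hxp
    show compIn G (pt x) x = compIn G (pt y) y
    rw [← hpteq]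
    exact compIn_eq_of_mem hx
  have hE' : E' = interEdges G (Set.range comp) := by
    rw [hE]
    ext e
    constructor
    · rintro ⟨he, u, v, rfl, hall⟩
      refine ⟨he, u, v, rfl, ?_⟩
      rintro S ⟨x, rfl⟩ ⟨hu, hv⟩
      exact hall (pt x) (hpart_mem x).1 ⟨hcomp_sub x hu, hcomp_sub x hv⟩
    · rintro ⟨he, u, v, rfl, hall⟩
      refine ⟨he, u, v, rfl, ?_⟩
      rintro P hPa ⟨hu, hv⟩
      have hadj : G.Adj u v := he
      have hPu : P = pt u := hpart_uniq u P hPa hu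
      have hvp : v ∈ pt u := hPu ▸ hv
      have hup : u ∈ pt u := (hpart_mem u).2
      have hadj' : (G.induce (pt u)).Adj ⟨v, hvp⟩ ⟨u, hup⟩ := by simpa using hadj.symm
      exact hall (comp u) ⟨u, rfl⟩ ⟨hxcomp u, ⟨hvp, hup, hadj'.reachable⟩⟩
  have hpartcomp : ∀ x : V, ∃ C : Set V, IsComponentSet (G.deleteEdges E') C ∧ comp x ⊆ C := by
    intro x
    refine ⟨{u | (G.deleteEdges E').Reachable u x}, ⟨x, rfl⟩, ?_⟩
    rintro z ⟨hzp, hxp, hr⟩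
    exact reach_delete_of_induce
      (fun a b ha hb _ => hinpart (pt x) (hpart_mem x).1 a b ha hb) hr
  refine ⟨Set.range comp, ⟨?_, ?_⟩, ?_, hE', ?_⟩
  · rintro S ⟨x, rfl⟩; exact ⟨x, hxcomp x⟩
  · intro x
    refine ⟨comp x, ⟨⟨x, rfl⟩, hxcomp x⟩, ?_⟩
    rintro S ⟨⟨y, rfl⟩, hxS⟩
    exact (hcomp_eq x y hxS).symm
  · rintro S ⟨x, rfl⟩; exact compIn_connected (hpart_mem x).2
  intro W hW T' hT'W hT'ne α hαd hex
  obtain ⟨A, hAW, hAt, hAT, hAα⟩ := hex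
  obtain ⟨w₀, rfl⟩ := hW
  have hWuniv : {u | G.Reachable u w₀} = Set.univ := by
    ext u; simpa using hG.preconnected u w₀
  obtain ⟨x₀, hx₀⟩ := hT'ne
  have hT'T : T' ⊆ T := fun z hz => (hT'W hz).1
  have hx₀T : x₀ ∈ T := hT'T hx₀
  have hx₀A : x₀ ∈ A := by
    have : x₀ ∈ A ∩ T := by rw [hAT]; exact hx₀
    exact this.1
  have hA₁A : compIn G A x₀ ⊆ A := compIn_subset G A x₀
  have hcl : ∀ ⦃u w : V⦄, u ∈ A → w ∈ compIn G A x₀ → G.Adj u w → u ∈ compIn G A x₀ :=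
    fun u w hu hw h => mem_compIn_of_adj hu hw h
  obtain ⟨hsplit, hdisj⟩ := ecut_split hA₁A hcl
  have hsum : (ecut G (compIn G A x₀)).ncard + (ecut G (A \ compIn G A x₀)).ncard = α := by
    rw [← hAα, hsplit, Set.ncard_union_eq hdisj (Set.toFinite _) (Set.toFinite _)]
  have hx₀A₁ : x₀ ∈ compIn G A x₀ := mem_compIn_self hx₀A
  have hβ0 : (ecut G (compIn G A x₀)).ncard = 0 → (ecut G (A \ compIn G A x₀)).ncard = 0 := by
    intro h0
    have hemp : ecut G (compIn G A x₀) = ∅ := (Set.ncard_eq_zero (Set.toFinite _)).mp h0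
    have hA₁univ : compIn G A x₀ = Set.univ := by
      ext v
      simp only [Set.mem_univ, iff_true]
      obtain ⟨p⟩ := hG.preconnected x₀ v
      exact walk_stays hemp p hx₀A₁
    rw [hA₁univ, Set.diff_univ, ecut_empty, Set.ncard_empty]
  have hT₁T : compIn G A x₀ ∩ T ⊆ T := Set.inter_subset_right
  have hx₀T₁ : x₀ ∈ compIn G A x₀ ∩ T := ⟨hx₀A₁, hx₀T⟩
  have hRT : (compIn G A x₀ ∩ T) ∪ ((A \ compIn G A x₀) ∩ T) = T' := by
    rw [← hAT]
    ext z
    constructor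
    · rintro (⟨h1, h2⟩ | ⟨⟨h1, -⟩, h2⟩)
      exacts [⟨hA₁A h1, h2⟩, ⟨h1, h2⟩]
    · rintro ⟨hzA, hzT⟩
      by_cases hz1 : z ∈ compIn G A x₀
      · exact Or.inl ⟨hz1, hzT⟩
      · exact Or.inr ⟨⟨hzA, hz1⟩, hzT⟩
  have hA₁t : (compIn G A x₀).ncard ≤ t :=
    le_trans (Set.ncard_le_ncard hA₁A (Set.toFinite _)) hAt
  have hRt : (A \ compIn G A x₀).ncard ≤ t :=
    le_trans (Set.ncard_le_ncard Set.diff_subset (Set.toFinite _)) hAt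
  have hα₁d : (ecut G (compIn G A x₀)).ncard ≤ d := by omega
  by_cases hmin : ∀ C : Set V, C.ncard ≤ t → C ∩ T = compIn G A x₀ ∩ T →
      (ecut G C).ncard ≤ d → (ecut G (compIn G A x₀)).ncard ≤ (ecut G C).ncard
  · obtain ⟨B₁, hB₁q, hB₁T, hB₁α, hB₁comp⟩ :=
      hcond (compIn G A x₀ ∩ T) hT₁T ⟨x₀, hx₀T₁⟩ (ecut G (compIn G A x₀)).ncard hα₁d
        ⟨⟨compIn G A x₀, hA₁t, rfl, rfl⟩, hmin⟩
        ⟨compIn G A x₀, hA₁t, rfl, rfl, compIn_connected hx₀A⟩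
    refine ⟨B₁ ∪ (A \ compIn G A x₀), by rw [hWuniv]; exact Set.subset_univ _, ?_, ?_, ?_, ?_⟩
    · calc (B₁ ∪ (A \ compIn G A x₀)).ncard ≤ B₁.ncard + (A \ compIn G A x₀).ncard :=
          Set.ncard_union_le _ _
        _ ≤ q + t := add_le_add hB₁q hRt
    · rw [Set.union_inter_distrib_right, hB₁T]; exact hRT
    · calc (ecut G (B₁ ∪ (A \ compIn G A x₀))).ncard
          ≤ (ecut G B₁ ∪ ecut G (A \ compIn G A x₀)).ncard :=
          Set.ncard_le_ncard (ecut_union_subset G _ _) (Set.toFinite _)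
        _ ≤ (ecut G B₁).ncard + (ecut G (A \ compIn G A x₀)).ncard := Set.ncard_union_le _ _
        _ ≤ α := by omega
    · rintro P ⟨x, rfl⟩
      obtain ⟨C, hC, hPC⟩ := hpartcomp x
      have hsub : ecut G (B₁ ∪ (A \ compIn G A x₀)) ∩ edgesWithin (comp x) ⊆
          (ecut G B₁ ∩ edgesWithin C) ∪ ecut G (A \ compIn G A x₀) := by
        rintro e ⟨he, hw⟩
        rcases ecut_union_subset G _ _ he with h1 | h1
        · exact Or.inl ⟨h1, fun z hz => hPC (hw z hz)⟩
        · exact Or.inr h1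
      have hC1 := hB₁comp C hC
      have hch := le_trans (Set.ncard_le_ncard hsub (Set.toFinite _)) (Set.ncard_union_le _ _)
      rcases Nat.eq_zero_or_pos (ecut G (compIn G A x₀)).ncard with h0 | h0
      · have := hβ0 h0; omega
      · omega
  · push_neg at hmin
    obtain ⟨C, hCt, hCT, hCd, hClt⟩ := hmin
    refine ⟨C ∪ (A \ compIn G A x₀), by rw [hWuniv]; exact Set.subset_univ _, ?_, ?_, ?_, ?_⟩
    · calc (C ∪ (A \ compIn G A x₀)).ncard ≤ C.ncard + (A \ compIn G A x₀).ncard :=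
          Set.ncard_union_le _ _
        _ ≤ q + t := add_le_add (le_trans hCt htq) hRt
    · rw [Set.union_inter_distrib_right, hCT]; exact hRT
    · calc (ecut G (C ∪ (A \ compIn G A x₀))).ncard
          ≤ (ecut G C ∪ ecut G (A \ compIn G A x₀)).ncard :=
          Set.ncard_le_ncard (ecut_union_subset G _ _) (Set.toFinite _)
        _ ≤ (ecut G C).ncard + (ecut G (A \ compIn G A x₀)).ncard := Set.ncard_union_le _ _
        _ ≤ α := by omega
    · rintro P ⟨x, rfl⟩
      have h1 : (ecut G (C ∪ (A \ compIn G A x₀)) ∩ edgesWithin (comp x)).ncard ≤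
          (ecut G (C ∪ (A \ compIn G A x₀))).ncard :=
        Set.ncard_le_ncard Set.inter_subset_left (Set.toFinite _)
      have h2 : (ecut G (C ∪ (A \ compIn G A x₀))).ncard ≤
          (ecut G C).ncard + (ecut G (A \ compIn G A x₀)).ncard := by
        calc (ecut G (C ∪ (A \ compIn G A x₀))).ncard
            ≤ (ecut G C ∪ ecut G (A \ compIn G A x₀)).ncard :=
            Set.ncard_le_ncard (ecut_union_subset G _ _) (Set.toFinite _)
          _ ≤ _ := Set.ncard_union_le _ _
      omega
end
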